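/- arXiv:1803.08313 — 9 statements merged into one kernel-verified Lean document; each statement's English description precedes it below -/
import Mathlib

section
/- Every core regular double Stone algebra A is a subdirect product of copies of C_3: there exist an index set I and an injective CRDSA homomorphism e : A → C_3^I (C_3^I with pointwise operations) such that for every i ∈ I the composition of e with the projection onto the i-th coordinate is surjective. -/
class DoubleStoneAlgebra (α : Type*) extends DistribLattice α, BoundedOrder α where
  pstar : α → α
  pplus : α → α
  pstar_spec : ∀ x y : α, y ⊓ x = ⊥ ↔ y ≤ pstar x
  pplus_spec : ∀ x y : α, y ⊔ x = ⊤ ↔ pplus x ≤ y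
  stone : ∀ x : α, pstar x ⊔ pstar (pstar x) = ⊤
  stone_dual : ∀ x : α, pplus x ⊓ pplus (pplus x) = ⊥

class CRDSA (α : Type*) extends DoubleStoneAlgebra α where
  regular : ∀ x y : α, pstar x = pstar y → pplus x = pplus y → x = y
  core_nonempty : ∃ k : α, pstar k = ⊥ ∧ pplus k = ⊤

open DoubleStoneAlgebra

/-- The three element chain C₃, realized as `Fin 3` with 0 = 0, S = 1, 1 = 2. -/
abbrev C3 := Fin 3

/-- Pseudocomplement on C₃: 0* = 1, S* = 0, 1* = 0. -/
def C3.star : C3 → C3 := fun a => if a = 0 then 2 else 0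

/-- Dual pseudocomplement on C₃: 0⁺ = 1, S⁺ = 1, 1⁺ = 0. -/
def C3.plus : C3 → C3 := fun a => if a = 2 then 0 else 2

universe u

section DSA
variable {A : Type*} [DoubleStoneAlgebra A]

lemma pstar_inf_self (x : A) : pstar x ⊓ x = ⊥ :=
  (pstar_spec x (pstar x)).mpr le_rfl

lemma inf_pstar_self (x : A) : x ⊓ pstar x = ⊥ := by
  rw [inf_comm]; exact pstar_inf_self x

lemma le_pstar_pstar (x : A) : x ≤ pstar (pstar x) :=
  (pstar_spec (pstar x) x).mp (inf_pstar_self x)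

lemma pstar_anti {x y : A} (h : x ≤ y) : pstar y ≤ pstar x :=
  (pstar_spec x (pstar y)).mp
    (le_bot_iff.mp ((inf_le_inf_left _ h).trans (le_of_eq (pstar_inf_self y))))

lemma pstar_pstar_pstar (x : A) : pstar (pstar (pstar x)) = pstar x :=
  le_antisymm (pstar_anti (le_pstar_pstar x)) (le_pstar_pstar (pstar x))

lemma pplus_sup_self (x : A) : pplus x ⊔ x = ⊤ :=
  (pplus_spec x (pplus x)).mpr le_rfl

lemma sup_pplus_self (x : A) : x ⊔ pplus x = ⊤ := by
  rw [sup_comm]; exact pplus_sup_self x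

lemma pplus_pplus_le (x : A) : pplus (pplus x) ≤ x :=
  (pplus_spec (pplus x) x).mp (sup_pplus_self x)

lemma pplus_anti {x y : A} (h : x ≤ y) : pplus y ≤ pplus x :=
  (pplus_spec y (pplus x)).mp
    (top_le_iff.mp ((le_of_eq (pplus_sup_self x).symm).trans (sup_le_sup_left h _)))

lemma pplus_pplus_pplus (x : A) : pplus (pplus (pplus x)) = pplus x :=
  le_antisymm (pplus_pplus_le (pplus x)) (pplus_anti (pplus_pplus_le x))

lemma pstar_bot : pstar (⊥ : A) = ⊤ :=
  top_le_iff.mp ((pstar_spec ⊥ ⊤).mp (by simp))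

lemma pstar_top : pstar (⊤ : A) = ⊥ := by
  have := pstar_inf_self (⊤ : A); simpa using this

lemma pplus_top : pplus (⊤ : A) = ⊥ :=
  le_bot_iff.mp ((pplus_spec ⊤ ⊥).mp (by simp))

lemma pplus_bot : pplus (⊥ : A) = ⊤ := by
  have := pplus_sup_self (⊥ : A); simpa using this

lemma pstar_sup (x y : A) : pstar (x ⊔ y) = pstar x ⊓ pstar y := by
  refine le_antisymm (le_inf (pstar_anti le_sup_left) (pstar_anti le_sup_right)) ?_
  refine (pstar_spec (x ⊔ y) (pstar x ⊓ pstar y)).mp ?_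
  rw [inf_sup_left]
  have h1 : pstar x ⊓ pstar y ⊓ x = ⊥ := by
    rw [inf_right_comm]; simp [pstar_inf_self x]
  have h2 : pstar x ⊓ pstar y ⊓ y = ⊥ := by
    rw [inf_assoc]; simp [pstar_inf_self y]
  rw [h1, h2, sup_idem]

lemma pplus_inf (x y : A) : pplus (x ⊓ y) = pplus x ⊔ pplus y := by
  refine le_antisymm ?_ (sup_le (pplus_anti inf_le_left) (pplus_anti inf_le_right))
  refine (pplus_spec (x ⊓ y) (pplus x ⊔ pplus y)).mp ?_
  rw [sup_inf_left]
  have h1 : pplus x ⊔ pplus y ⊔ x = ⊤ := by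
    rw [sup_right_comm, sup_comm (pplus x) x, sup_pplus_self x]; simp
  have h2 : pplus x ⊔ pplus y ⊔ y = ⊤ := by
    rw [sup_assoc, sup_comm (pplus y) y, sup_pplus_self y]; simp
  rw [h1, h2, inf_idem]

lemma pstar_inf (x y : A) : pstar (x ⊓ y) = pstar x ⊔ pstar y := by
  refine le_antisymm ?_ (sup_le (pstar_anti inf_le_left) (pstar_anti inf_le_right))
  have key : pstar (x ⊓ y) ⊓ pstar (pstar x) ≤ pstar y := by
    refine (pstar_spec y _).mp ?_
    set b := pstar (x ⊓ y) ⊓ pstar (pstar x) ⊓ y with hb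
    have h0 : b ⊓ x = ⊥ := by
      have hle : b ⊓ x ≤ pstar (x ⊓ y) ⊓ (x ⊓ y) := by
        refine le_inf (inf_le_left.trans (inf_le_left.trans inf_le_left)) ?_
        exact le_inf inf_le_right (inf_le_left.trans inf_le_right)
      exact le_bot_iff.mp (hle.trans (le_of_eq (pstar_inf_self (x ⊓ y))))
    have hle1 : b ≤ pstar x := (pstar_spec x b).mp h0
    have hle2 : b ≤ pstar (pstar x) := inf_le_left.trans inf_le_right
    have : b ≤ pstar x ⊓ pstar (pstar x) := le_inf hle1 hle2
    exact le_bot_iff.mp (this.trans (le_of_eq (inf_pstar_self (pstar x))))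
  calc pstar (x ⊓ y) = pstar (x ⊓ y) ⊓ (pstar x ⊔ pstar (pstar x)) := by
        rw [stone x, inf_top_eq]
    _ = (pstar (x ⊓ y) ⊓ pstar x) ⊔ (pstar (x ⊓ y) ⊓ pstar (pstar x)) := inf_sup_left _ _ _
    _ ≤ pstar x ⊔ pstar y := sup_le_sup inf_le_right key

lemma pplus_sup (x y : A) : pplus (x ⊔ y) = pplus x ⊓ pplus y := by
  refine le_antisymm (le_inf (pplus_anti le_sup_left) (pplus_anti le_sup_right)) ?_
  have key : pplus y ≤ pplus (x ⊔ y) ⊔ pplus (pplus x) := by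
    refine (pplus_spec y _).mp ?_
    set b := pplus (x ⊔ y) ⊔ pplus (pplus x) ⊔ y with hb
    have h0 : b ⊔ x = ⊤ := by
      have hle : pplus (x ⊔ y) ⊔ (x ⊔ y) ≤ b ⊔ x := by
        refine sup_le (le_sup_left.trans (le_sup_left.trans le_sup_left)) ?_
        exact sup_le le_sup_right (le_sup_right.trans le_sup_left)
      exact top_le_iff.mp ((le_of_eq (pplus_sup_self (x ⊔ y)).symm).trans hle)
    have hle1 : pplus x ≤ b := (pplus_spec x b).mp h0
    have hle2 : pplus (pplus x) ≤ b := le_sup_right.trans le_sup_left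
    have : pplus x ⊔ pplus (pplus x) ≤ b := sup_le hle1 hle2
    exact top_le_iff.mp ((le_of_eq (sup_pplus_self (pplus x)).symm).trans this)
  calc pplus x ⊓ pplus y ≤ pplus x ⊓ (pplus (x ⊔ y) ⊔ pplus (pplus x)) :=
        inf_le_inf_left _ key
    _ = (pplus x ⊓ pplus (x ⊔ y)) ⊔ (pplus x ⊓ pplus (pplus x)) := inf_sup_left _ _ _
    _ ≤ pplus (x ⊔ y) ⊔ ⊥ := sup_le_sup inf_le_right (le_of_eq (stone_dual x))
    _ = pplus (x ⊔ y) := by simp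

lemma pstar_pplus (x : A) : pplus (pstar x) = pstar (pstar x) := by
  refine le_antisymm ((pplus_spec (pstar x) _).mp (by rw [sup_comm]; exact stone x)) ?_
  calc pstar (pstar x) = pstar (pstar x) ⊓ (pplus (pstar x) ⊔ pstar x) := by
        rw [pplus_sup_self (pstar x), inf_top_eq]
    _ = (pstar (pstar x) ⊓ pplus (pstar x)) ⊔ (pstar (pstar x) ⊓ pstar x) := inf_sup_left _ _ _
    _ ≤ pplus (pstar x) ⊔ ⊥ := sup_le_sup inf_le_right
        (le_of_eq (pstar_inf_self (pstar x)))
    _ = pplus (pstar x) := by simp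

lemma pplus_pstar (x : A) : pstar (pplus x) = pplus (pplus x) := by
  refine le_antisymm ?_ ((pstar_spec (pplus x) _).mp (by rw [inf_comm]; exact stone_dual x))
  calc pstar (pplus x) = pstar (pplus x) ⊓ (pplus x ⊔ pplus (pplus x)) := by
        rw [sup_pplus_self (pplus x), inf_top_eq]
    _ = (pstar (pplus x) ⊓ pplus x) ⊔ (pstar (pplus x) ⊓ pplus (pplus x)) := inf_sup_left _ _ _
    _ ≤ ⊥ ⊔ pplus (pplus x) := sup_le_sup (le_of_eq (pstar_inf_self (pplus x))) inf_le_right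
    _ = pplus (pplus x) := by simp

lemma pstar_pplus_pplus (x : A) : pplus (pplus (pstar x)) = pstar x := by
  rw [pstar_pplus x, pstar_pplus (pstar x), pstar_pstar_pstar]

lemma pplus_pstar_pstar (x : A) : pstar (pstar (pplus x)) = pplus x := by
  rw [pplus_pstar x, pplus_pstar (pplus x), pplus_pplus_pplus]

/-- x++ ≤ x** -/
lemma pplus_pplus_le_pstar_pstar (x : A) : pplus (pplus x) ≤ pstar (pstar x) :=
  (pplus_pplus_le x).trans (le_pstar_pstar x)

end DSA

section Main
open Order Classical

/-- auxiliary value function into `C3`. -/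
noncomputable def cval (p q : Prop) : C3 := if p then (if q then 0 else 1) else 2

lemma cval_sup {p1 q1 p2 q2 : Prop} :
    cval (p1 ∧ p2) (q1 ∧ q2) = cval p1 q1 ⊔ cval p2 q2 := by
  by_cases h1 : p1 <;> by_cases h2 : q1 <;> by_cases h3 : p2 <;> by_cases h4 : q2 <;>
    simp_all [cval]

lemma cval_inf {p1 q1 p2 q2 : Prop} (hq1 : q1 → p1) (hq2 : q2 → p2) :
    cval (p1 ∨ p2) (q1 ∨ q2) = cval p1 q1 ⊓ cval p2 q2 := by
  by_cases h1 : p1 <;> by_cases h2 : q1 <;> by_cases h3 : p2 <;> by_cases h4 : q2 <;>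
    simp_all [cval]

lemma cval_star {p q r : Prop} (hqp : q → p) (hr : r ↔ ¬q) :
    cval r r = C3.star (cval p q) := by
  by_cases h1 : p <;> by_cases h2 : q <;>
    simp_all [cval, C3.star]

lemma cval_plus {p q r : Prop} (hqp : q → p) (hr : r ↔ ¬p) :
    cval r r = C3.plus (cval p q) := by
  by_cases h1 : p <;> by_cases h2 : q <;>
    simp_all [cval, C3.plus]

lemma cval_ne_zero {p q : Prop} (hq : ¬ q) : cval p q ≠ 0 := by
  by_cases h1 : p <;> simp_all [cval]

lemma cval_eq_zero {p q : Prop} (hp : p) (hq : q) : cval p q = 0 := by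
  simp [cval, hp, hq]

lemma cval_ne_two {p q : Prop} (hp : p) : cval p q ≠ 2 := by
  by_cases h2 : q <;> simp_all [cval]

lemma cval_eq_two {p q : Prop} (hp : ¬ p) : cval p q = 2 := by
  simp [cval, hp]

/-- prime ideal separation from Stone's separation theorem. -/
lemma sep_prime {A : Type u} [CRDSA A] {a b : A} (h : ¬ a ≤ b) :
    ∃ J : Order.Ideal A, J.IsPrime ∧ b ∈ J ∧ a ∉ J := by
  have hdisj : Disjoint ((Order.PFilter.principal a : Order.PFilter A) : Set A)
      ((Order.Ideal.principal b : Order.Ideal A) : Set A) := by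
    rw [Set.disjoint_left]
    intro z hz1 hz2
    simp only [SetLike.mem_coe, Order.PFilter.mem_principal] at hz1
    simp only [SetLike.mem_coe, Order.Ideal.mem_principal] at hz2
    exact h (hz1.trans hz2)
  obtain ⟨J, hJp, hJq, hJd⟩ := DistribLattice.prime_ideal_of_disjoint_filter_ideal hdisj
  refine ⟨J, hJp, hJq Order.Ideal.mem_principal_self, ?_⟩
  intro haJ
  exact Set.disjoint_left.mp hJd (by simp [Order.PFilter.mem_principal]) haJ

lemma compl_not_mem {A : Type u} [CRDSA A] {J : Order.Ideal A} (hJ : J.IsPrime)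
    {a b : A} (hab : a ⊓ b = ⊥) (hab' : a ⊔ b = ⊤) : a ∈ J ↔ b ∉ J := by
  constructor
  · intro ha hb
    exact hJ.toIsProper.top_notMem (hab' ▸ Order.Ideal.sup_mem ha hb)
  · intro hb
    rcases hJ.mem_or_mem (x := a) (y := b) (hab ▸ J.bot_mem) with h | h
    · exact h
    · exact absurd h hb

/-- the index type: prime ideals of `A`. -/
def PIdx (A : Type u) [CRDSA A] : Type u := {J : Order.Ideal A // J.IsPrime}

/-- the embedding of `A` into `C3 ^ PIdx A`. -/
noncomputable def eMap {A : Type u} [CRDSA A] (x : A) (J : PIdx A) : C3 :=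
  cval (pplus (pplus x) ∈ J.1) (pstar (pstar x) ∈ J.1)

lemma eMap_QP {A : Type u} [CRDSA A] (x : A) (J : PIdx A)
    (h : pstar (pstar x) ∈ J.1) : pplus (pplus x) ∈ J.1 :=
  J.1.lower (pplus_pplus_le_pstar_pstar x) h

theorem CRDSA_aux (A : Type u) [CRDSA A] :
    ∃ (I : Type u) (e : A → I → C3),
      Function.Injective e ∧
      (∀ x y : A, e (x ⊔ y) = e x ⊔ e y) ∧
      (∀ x y : A, e (x ⊓ y) = e x ⊓ e y) ∧
      (∀ x : A, e (pstar x) = fun i => C3.star (e x i)) ∧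
      (∀ x : A, e (pplus x) = fun i => C3.plus (e x i)) ∧
      e ⊥ = ⊥ ∧ e ⊤ = ⊤ ∧
      (∀ i : I, Function.Surjective (fun a : A => e a i)) := by
  classical
  obtain ⟨k, hk1, hk2⟩ := CRDSA.core_nonempty (α := A)
  refine ⟨PIdx A, eMap, ?_, ?_, ?_, ?_, ?_, ?_, ?_, ?_⟩
  · -- injective
    intro x y hxy
    have hss : ∀ {u v : A}, eMap u = eMap v → pstar (pstar u) ≤ pstar (pstar v) := by
      intro u v h
      by_contra hle
      obtain ⟨J, hJ, hbJ, haJ⟩ := sep_prime hle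
      have h0 := congrFun h (⟨J, hJ⟩ : PIdx A)
      exact cval_ne_zero haJ (h0.trans (cval_eq_zero (eMap_QP v ⟨J, hJ⟩ hbJ) hbJ))
    have hpp : ∀ {u v : A}, eMap u = eMap v → pplus (pplus u) ≤ pplus (pplus v) := by
      intro u v h
      by_contra hle
      obtain ⟨J, hJ, hbJ, haJ⟩ := sep_prime hle
      have h0 := congrFun h (⟨J, hJ⟩ : PIdx A)
      exact cval_ne_two hbJ (h0.symm.trans (cval_eq_two haJ))
    have h1 : pstar (pstar x) = pstar (pstar y) := le_antisymm (hss hxy) (hss hxy.symm)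
    have h2 : pplus (pplus x) = pplus (pplus y) := le_antisymm (hpp hxy) (hpp hxy.symm)
    refine CRDSA.regular x y ?_ ?_
    · rw [← pstar_pstar_pstar x, ← pstar_pstar_pstar y, h1]
    · rw [← pplus_pplus_pplus x, ← pplus_pplus_pplus y, h2]
  · -- sup
    intro x y
    funext J
    have h0 : eMap (x ⊔ y) J = cval (pplus (pplus x) ∈ J.1 ∧ pplus (pplus y) ∈ J.1)
        (pstar (pstar x) ∈ J.1 ∧ pstar (pstar y) ∈ J.1) := by
      unfold eMap
      rw [pplus_sup, pplus_inf, pstar_sup, pstar_inf, Order.Ideal.sup_mem_iff,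
        Order.Ideal.sup_mem_iff]
    rw [Pi.sup_apply] at *
    exact h0.trans cval_sup
  · -- inf
    intro x y
    funext J
    have hmem : ∀ a b : A, a ⊓ b ∈ J.1 ↔ a ∈ J.1 ∨ b ∈ J.1 := by
      intro a b
      exact ⟨fun h => J.2.mem_or_mem h,
        fun h => h.elim (fun h => J.1.lower inf_le_left h) (fun h => J.1.lower inf_le_right h)⟩
    have h0 : eMap (x ⊓ y) J = cval (pplus (pplus x) ∈ J.1 ∨ pplus (pplus y) ∈ J.1)
        (pstar (pstar x) ∈ J.1 ∨ pstar (pstar y) ∈ J.1) := by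
      unfold eMap
      rw [pplus_inf, pplus_sup, pstar_inf, pstar_sup, hmem, hmem]
    exact h0.trans (cval_inf (eMap_QP x J) (eMap_QP y J))
  · -- pstar
    intro x
    funext J
    have h0 : eMap (pstar x) J = cval (pstar x ∈ J.1) (pstar x ∈ J.1) := by
      unfold eMap
      rw [pstar_pplus_pplus, pstar_pstar_pstar]
    exact h0.trans (cval_star (eMap_QP x J)
      (compl_not_mem J.2 (inf_pstar_self (pstar x)) (stone x)))
  · -- pplus
    intro x
    funext J
    have h0 : eMap (pplus x) J = cval (pplus x ∈ J.1) (pplus x ∈ J.1) := by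
      unfold eMap
      rw [pplus_pplus_pplus, pplus_pstar_pstar]
    exact h0.trans (cval_plus (eMap_QP x J)
      (compl_not_mem J.2 (stone_dual x) (sup_pplus_self (pplus x))))
  · -- bot
    funext J
    show cval (pplus (pplus (⊥ : A)) ∈ J.1) (pstar (pstar (⊥ : A)) ∈ J.1) = _
    rw [pplus_bot, pplus_top, pstar_bot, pstar_top]
    exact cval_eq_zero J.1.bot_mem J.1.bot_mem
  · -- top
    funext J
    show cval (pplus (pplus (⊤ : A)) ∈ J.1) (pstar (pstar (⊤ : A)) ∈ J.1) = _
    rw [pplus_top, pplus_bot]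
    exact cval_eq_two J.2.toIsProper.top_notMem
  · -- surjectivity
    intro J v
    fin_cases v
    · refine ⟨⊥, ?_⟩
      show cval (pplus (pplus (⊥ : A)) ∈ J.1) (pstar (pstar (⊥ : A)) ∈ J.1) = _
      rw [pplus_bot, pplus_top, pstar_bot, pstar_top]
      exact cval_eq_zero J.1.bot_mem J.1.bot_mem
    · refine ⟨k, ?_⟩
      show cval (pplus (pplus k) ∈ J.1) (pstar (pstar k) ∈ J.1) = _
      have h1 : pplus (pplus k) ∈ J.1 := by rw [hk2, pplus_top]; exact J.1.bot_mem
      have h2 : pstar (pstar k) ∉ J.1 := by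
        rw [hk1, pstar_bot]; exact J.2.toIsProper.top_notMem
      simp [cval, h1, h2]
    · refine ⟨⊤, ?_⟩
      show cval (pplus (pplus (⊤ : A)) ∈ J.1) (pstar (pstar (⊤ : A)) ∈ J.1) = _
      rw [pplus_top, pplus_bot]
      exact cval_eq_two J.2.toIsProper.top_notMem
end Main



/-- every core regular double Stone algebra is a subdirect product of
copies of C₃: there is an index set `I` and an injective CRDSA homomorphism
`e : A → C₃^I` (pointwise operations on `I → C3`) whose composition with each
projection is surjective. -/
theorem CRDSA_subdirect_product_of_C3 (A : Type u) [CRDSA A] :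
    ∃ (I : Type u) (e : A → I → C3),
      Function.Injective e ∧
      (∀ x y : A, e (x ⊔ y) = e x ⊔ e y) ∧
      (∀ x y : A, e (x ⊓ y) = e x ⊓ e y) ∧
      (∀ x : A, e (pstar x) = fun i => C3.star (e x i)) ∧
      (∀ x : A, e (pplus x) = fun i => C3.plus (e x i)) ∧
      e ⊥ = ⊥ ∧ e ⊤ = ⊤ ∧
      (∀ i : I, Function.Surjective (fun a : A => e a i)) :=
  CRDSA_aux A
end

section
/- For every Boolean algebra B there exists a core regular double Stone algebra A such that B is isomorphic, as a Boolean algebra, to the center C(A) of A with the induced operations ∧, ∨ and complementation a ↦ a*. -/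
open DoubleStoneAlgebra

universe u

/-!
Inside `B × B` take the pairs `(a, b)` with `a ≤ b`. There `(a, b)* = (bᶜ, bᶜ)` and
`(a, b)⁺ = (aᶜ, aᶜ)`, so a pair is recovered from its two complements (regularity), `(⊥, ⊤)` lies
in the core, and `(a, b)* = (a, b)⁺` forces `a = b`: the center is the diagonal, a copy of `B`.
-/

def orderedPairs (α : Type*) [Lattice α] : Sublattice (α × α) where
  carrier := {p | p.1 ≤ p.2}
  supClosed' _ ha _ hb := sup_le_sup ha hb
  infClosed' _ ha _ hb := inf_le_inf ha hb

namespace orderedPairs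

section Lattice

variable {α : Type*} [Lattice α]

instance [BoundedOrder α] : BoundedOrder (orderedPairs α) :=
  Subtype.boundedOrder (le_refl (⊥ : α)) (le_refl (⊤ : α))

def diag (a : α) : orderedPairs α := ⟨(a, a), le_refl a⟩

theorem diag_injective : Function.Injective (diag : α → orderedPairs α) :=
  fun _ _ h => congrArg (fun p : orderedPairs α => p.1.1) h

theorem mem_range_diag {p : orderedPairs α} : p ∈ Set.range diag ↔ p.1.1 = p.1.2 :=
  ⟨by rintro ⟨a, rfl⟩; rfl, fun h => ⟨p.1.1, Subtype.ext (Prod.ext rfl h)⟩⟩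

theorem diag_inf (a b : α) : diag (a ⊓ b) = diag a ⊓ diag b := rfl

theorem diag_sup (a b : α) : diag (a ⊔ b) = diag a ⊔ diag b := rfl

theorem diag_bot [BoundedOrder α] : diag (⊥ : α) = ⊥ := rfl

theorem diag_top [BoundedOrder α] : diag (⊤ : α) = ⊤ := rfl

theorem le_diag_iff {p : orderedPairs α} {a : α} : p ≤ diag a ↔ p.1.2 ≤ a :=
  ⟨fun h => h.2, fun h => ⟨p.2.trans h, h⟩⟩

theorem diag_le_iff {p : orderedPairs α} {a : α} : diag a ≤ p ↔ a ≤ p.1.1 :=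
  ⟨fun h => h.1, fun h => ⟨h, h.trans p.2⟩⟩

theorem eq_bot_iff_snd [BoundedOrder α] {p : orderedPairs α} : p = ⊥ ↔ p.1.2 = ⊥ := by
  rw [← le_bot_iff, ← diag_bot, le_diag_iff, le_bot_iff]

theorem eq_top_iff_fst [BoundedOrder α] {p : orderedPairs α} : p = ⊤ ↔ p.1.1 = ⊤ := by
  rw [← top_le_iff, ← diag_top, diag_le_iff, top_le_iff]

end Lattice

variable {B : Type*} [BooleanAlgebra B]

instance : CRDSA (orderedPairs B) where
  pstar p := diag p.1.2ᶜ
  pplus p := diag p.1.1ᶜ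
  pstar_spec p q := by
    rw [eq_bot_iff_snd, le_diag_iff, le_compl_iff_disjoint_right, disjoint_iff]; rfl
  pplus_spec p q := by
    rw [eq_top_iff_fst, diag_le_iff, ← codisjoint_iff_compl_le_left, codisjoint_iff]; rfl
  stone p := by rw [← diag_sup]; exact congrArg diag sup_compl_eq_top
  stone_dual p := by rw [← diag_inf]; exact congrArg diag inf_compl_eq_bot
  regular p q hstar hplus :=
    Subtype.ext (Prod.ext (compl_injective (diag_injective hplus))
      (compl_injective (diag_injective hstar)))
  core_nonempty := ⟨⟨(⊥, ⊤), bot_le⟩, congrArg diag compl_top, congrArg diag compl_bot⟩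

theorem pstar_eq_pplus_iff {p : orderedPairs B} : pstar p = pplus p ↔ p.1.1 = p.1.2 :=
  ⟨fun h => (compl_injective (diag_injective h)).symm,
    fun h => congrArg (fun a => diag aᶜ) h.symm⟩

end orderedPairs

/-- every Boolean algebra `B` is (isomorphic, as a Boolean algebra, to)
the center `C(A) = {a : a* = a⁺}` of some core regular double Stone algebra `A`:
there is a map `f : B → A` which is injective, has range exactly the center of `A`,
and preserves `⊓`, `⊔`, `⊥`, `⊤`, and carries complementation to `a ↦ a*`. -/
theorem boolean_algebra_is_center_of_CRDSA (B : Type u) [BooleanAlgebra B] :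
    ∃ (A : Type u) (_ : CRDSA A) (f : B → A),
      Function.Injective f ∧
      Set.range f = {a : A | pstar a = pplus a} ∧
      (∀ x y : B, f (x ⊓ y) = f x ⊓ f y) ∧
      (∀ x y : B, f (x ⊔ y) = f x ⊔ f y) ∧
      (∀ x : B, f xᶜ = pstar (f x)) ∧
      f ⊥ = ⊥ ∧ f ⊤ = ⊤ :=
  ⟨orderedPairs B, inferInstance, orderedPairs.diag, orderedPairs.diag_injective,
    Set.ext fun _ => orderedPairs.mem_range_diag.trans orderedPairs.pstar_eq_pplus_iff.symm,
    orderedPairs.diag_inf, orderedPairs.diag_sup, fun _ => rfl,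
    orderedPairs.diag_bot, orderedPairs.diag_top⟩
end

section
/- If L is a core regular double Stone algebra, then B_+ = Φ_+[L], ordered by inclusion with join ∪, meet ∩, bottom ∅ and top pf(L), is itself a core regular double Stone algebra with pseudocomplement Φ_+(a)* = Φ_+(a*) and dual pseudocomplement Φ_+(a)+ = Φ_+(a+), and Φ_+ : L → B_+ is an isomorphism of core regular double Stone algebras (a bijection preserving ∨, ∧, *, +, 0, 1 and the core element). -/
open DoubleStoneAlgebra

/-- A prime filter of a bounded distributive lattice: a proper, upward-closed subset
closed under meets such that `a ⊔ b ∈ F` implies `a ∈ F` or `b ∈ F`. -/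
structure IsPrimeFilter {L : Type*} [DistribLattice L] [BoundedOrder L] (F : Set L) : Prop where
  top_mem : ⊤ ∈ F
  bot_not_mem : ⊥ ∉ F
  mem_of_le : ∀ a ∈ F, ∀ b : L, a ≤ b → b ∈ F
  inf_mem : ∀ a ∈ F, ∀ b ∈ F, a ⊓ b ∈ F
  prime : ∀ a b : L, a ⊔ b ∈ F → a ∈ F ∨ b ∈ F

/-- `pf L`: the set of prime filters of `L`. -/
def pf (L : Type*) [DistribLattice L] [BoundedOrder L] := {F : Set L // IsPrimeFilter F}

/-- `Φ₊ : L → P(pf L)`, `Φ₊(a) = {x ∈ pf L : a ∈ x}`. -/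
def PhiPlus {L : Type*} [DistribLattice L] [BoundedOrder L] (a : L) : Set (pf L) :=
  {x : pf L | a ∈ x.1}

/-! The prime filter theorem separates `a ≰ b` by a prime filter containing `a` but not `b`, so
`Φ₊` is an order embedding of `L` into `Set (pf L)`; primeness and the filter axioms make it a
bounded lattice homomorphism. Every axiom of a core regular double Stone algebra is an equation
or an inequality between lattice terms, so all of them transfer along `Φ₊` to `B₊`. -/

namespace IsPrimeFilter

variable {L : Type*} [DistribLattice L] [BoundedOrder L]

theorem compl_of_isPrime {J : Order.Ideal L} (hJ : J.IsPrime) : IsPrimeFilter (J : Set L)ᶜ where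
  top_mem := hJ.top_notMem
  bot_not_mem h := h J.bot_mem
  mem_of_le _ ha _ hab hb := ha (J.lower hab hb)
  inf_mem _ ha _ hb hab := (hJ.mem_or_mem hab).elim ha hb
  prime a b hab := by
    by_contra! h
    exact hab (J.sup_mem (not_not.mp h.1) (not_not.mp h.2))

theorem exists_mem_not_mem {a b : L} (h : ¬a ≤ b) :
    ∃ F : Set L, IsPrimeFilter F ∧ a ∈ F ∧ b ∉ F := by
  have hdisj : Disjoint ((Order.PFilter.principal a : Order.PFilter L) : Set L)
      (Order.Ideal.principal b : Set L) :=
    Set.disjoint_left.mpr fun _ hax hxb => h (hax.trans hxb)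
  obtain ⟨J, hJ, hbJ, haJ⟩ := DistribLattice.prime_ideal_of_disjoint_filter_ideal hdisj
  exact ⟨(J : Set L)ᶜ, compl_of_isPrime hJ, Set.disjoint_left.mp haJ le_rfl,
    fun hb => hb (hbJ Order.Ideal.mem_principal_self)⟩

end IsPrimeFilter

section PhiPlus

variable {L : Type*} [DistribLattice L] [BoundedOrder L]

theorem PhiPlus_subset_PhiPlus_iff {a b : L} : PhiPlus a ⊆ PhiPlus b ↔ a ≤ b := by
  refine ⟨fun hab => ?_, fun hab F haF => F.2.mem_of_le a haF b hab⟩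
  by_contra h
  obtain ⟨F, hF, haF, hbF⟩ := IsPrimeFilter.exists_mem_not_mem h
  exact hbF (hab (show (⟨F, hF⟩ : pf L) ∈ PhiPlus a from haF))

theorem PhiPlus_injective : Function.Injective (PhiPlus (L := L)) := fun _ _ h =>
  le_antisymm (PhiPlus_subset_PhiPlus_iff.mp h.le) (PhiPlus_subset_PhiPlus_iff.mp h.ge)

theorem PhiPlus_sup (a b : L) : PhiPlus (a ⊔ b) = PhiPlus a ∪ PhiPlus b := by
  ext F
  refine ⟨F.2.prime a b, ?_⟩
  rintro (haF | hbF)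
  · exact F.2.mem_of_le a haF _ le_sup_left
  · exact F.2.mem_of_le b hbF _ le_sup_right

theorem PhiPlus_inf (a b : L) : PhiPlus (a ⊓ b) = PhiPlus a ∩ PhiPlus b := by
  ext F
  refine ⟨fun h => ⟨F.2.mem_of_le _ h a inf_le_left, F.2.mem_of_le _ h b inf_le_right⟩, ?_⟩
  rintro ⟨haF, hbF⟩
  exact F.2.inf_mem a haF b hbF

theorem PhiPlus_bot : PhiPlus (⊥ : L) = ∅ :=
  Set.eq_empty_of_forall_notMem fun F => F.2.bot_not_mem

theorem PhiPlus_top : PhiPlus (⊤ : L) = Set.univ :=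
  Set.eq_univ_of_forall fun F => F.2.top_mem

theorem PhiPlus_eq_empty_iff {a : L} : PhiPlus a = ∅ ↔ a = ⊥ := by
  rw [← PhiPlus_bot, PhiPlus_injective.eq_iff]

theorem PhiPlus_eq_univ_iff {a : L} : PhiPlus a = Set.univ ↔ a = ⊤ := by
  rw [← PhiPlus_top, PhiPlus_injective.eq_iff]

end PhiPlus

/-- if `L` is a core regular double Stone algebra then
`B₊ = Φ₊[L] ⊆ P(pf L)`, ordered by inclusion with join ∪, meet ∩, bottom ∅ and top
`pf L`, is itself a core regular double Stone algebra, with pseudocomplement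
`Φ₊(a)* = Φ₊(a*)` and dual pseudocomplement `Φ₊(a)⁺ = Φ₊(a⁺)`, and
`Φ₊ : L → B₊` is an isomorphism of core regular double Stone algebras: a bijection
onto `B₊` preserving ⊔, ⊓, ⊥, ⊤, the (dual) pseudocomplements and the core element. -/
theorem PhiPlus_CRDSA_iso (L : Type*) [CRDSA L] :
    -- Φ₊ is a bijection from L onto B₊ = Φ₊[L]
    Function.Injective (PhiPlus (L := L)) ∧
    -- Φ₊ is a bounded lattice homomorphism
    (∀ a b : L, PhiPlus (a ⊔ b) = PhiPlus a ∪ PhiPlus b) ∧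
    (∀ a b : L, PhiPlus (a ⊓ b) = PhiPlus a ∩ PhiPlus b) ∧
    PhiPlus (⊥ : L) = (∅ : Set (pf L)) ∧
    PhiPlus (⊤ : L) = (Set.univ : Set (pf L)) ∧
    -- Φ₊(a*) is the pseudocomplement of Φ₊(a) in B₊ and Φ₊(a⁺) its dual pseudocomplement
    (∀ a b : L, PhiPlus b ∩ PhiPlus a = ∅ ↔ PhiPlus b ⊆ PhiPlus (pstar a)) ∧
    (∀ a b : L, PhiPlus b ∪ PhiPlus a = Set.univ ↔ PhiPlus (pplus a) ⊆ PhiPlus b) ∧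
    -- the Stone identities hold in B₊
    (∀ a : L, PhiPlus (pstar a) ∪ PhiPlus (pstar (pstar a)) = Set.univ) ∧
    (∀ a : L, PhiPlus (pplus a) ∩ PhiPlus (pplus (pplus a)) = ∅) ∧
    -- B₊ is regular
    (∀ a b : L, PhiPlus (pstar a) = PhiPlus (pstar b) →
      PhiPlus (pplus a) = PhiPlus (pplus b) → PhiPlus a = PhiPlus b) ∧
    -- B₊ has nonempty core and Φ₊ preserves the core element
    (∀ k : L, pstar k = ⊥ ∧ pplus k = ⊤ →
      PhiPlus (pstar k) = (∅ : Set (pf L)) ∧ PhiPlus (pplus k) = Set.univ) := by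
  refine ⟨PhiPlus_injective, PhiPlus_sup, PhiPlus_inf, PhiPlus_bot, PhiPlus_top,
    fun a b => ?_, fun a b => ?_, fun a => ?_, fun a => ?_, fun a b h₁ h₂ => ?_, ?_⟩
  · rw [← PhiPlus_inf, PhiPlus_eq_empty_iff, PhiPlus_subset_PhiPlus_iff]
    exact pstar_spec a b
  · rw [← PhiPlus_sup, PhiPlus_eq_univ_iff, PhiPlus_subset_PhiPlus_iff]
    exact pplus_spec a b
  · rw [← PhiPlus_sup, PhiPlus_eq_univ_iff]
    exact stone a
  · rw [← PhiPlus_inf, PhiPlus_eq_empty_iff]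
    exact stone_dual a
  · exact congrArg PhiPlus (CRDSA.regular a b (PhiPlus_injective h₁) (PhiPlus_injective h₂))
  · rintro k ⟨hk_star, hk_plus⟩
    rw [hk_star, hk_plus]
    exact ⟨PhiPlus_bot, PhiPlus_top⟩
end

section
/- Let (X,t1,t2) be a pairwise zero-dimensional bitopological space. Then (B1,∪,∩,∅,X) is a double p-algebra, i.e., every u ∈ B1 has a pseudocomplement (a greatest w ∈ B1 with u ∩ w = ∅) and a dual pseudocomplement (a least w ∈ B1 with u ∪ w = X), if and only if both of the following hold: (1) for every v ∈ B2, Int_1(v) ∈ B1, and (2) for every u ∈ B1, Int_2(u) ∈ B2. In that case the pseudocomplement is u* = Int_1(u^c) = Cl_1(u)^c and the dual pseudocomplement is u+ = Int_2(u)^c = Cl_2(u^c). -/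
open Topology

/-- `B1 = t1 ∩ δ2`: sets that are `t1`-open and `t2`-closed. -/
def B1 {X : Type*} (t1 t2 : TopologicalSpace X) : Set (Set X) :=
  {u : Set X | IsOpen[t1] u ∧ IsClosed[t2] u}

/-- `B2 = t2 ∩ δ1`: sets that are `t2`-open and `t1`-closed. -/
def B2 {X : Type*} (t1 t2 : TopologicalSpace X) : Set (Set X) :=
  {u : Set X | IsOpen[t2] u ∧ IsClosed[t1] u}

/-- A bitopological space `(X,t1,t2)` is pairwise zero-dimensional if `B1` is a
basis for `t1` and `B2` is a basis for `t2`. -/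
def PairwiseZeroDim {X : Type*} (t1 t2 : TopologicalSpace X) : Prop :=
  @TopologicalSpace.IsTopologicalBasis X t1 (B1 t1 t2) ∧
  @TopologicalSpace.IsTopologicalBasis X t2 (B2 t1 t2)

private theorem basis_exists {X : Type*} (t : TopologicalSpace X) {B : Set (Set X)}
    (hb : @TopologicalSpace.IsTopologicalBasis X t B) {a : X} {u : Set X}
    (ha : a ∈ u) (hu : IsOpen[t] u) : ∃ v ∈ B, a ∈ v ∧ v ⊆ u := by
  letI := t; exact hb.exists_subset_of_mem_open ha hu

private theorem int_subset {X : Type*} (t : TopologicalSpace X) (s : Set X) :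
    @interior X t s ⊆ s := by letI := t; exact interior_subset

private theorem int_maximal {X : Type*} (t : TopologicalSpace X) {s u : Set X}
    (h : u ⊆ s) (hu : IsOpen[t] u) : u ⊆ @interior X t s := by
  letI := t; exact interior_maximal h hu

private theorem isOpen_int {X : Type*} (t : TopologicalSpace X) (s : Set X) :
    IsOpen[t] (@interior X t s) := by letI := t; exact isOpen_interior

private theorem open_compl {X : Type*} (t : TopologicalSpace X) {s : Set X}
    (h : IsClosed[t] s) : IsOpen[t] sᶜ := by letI := t; exact h.isOpen_compl

private theorem closed_compl {X : Type*} (t : TopologicalSpace X) {s : Set X}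
    (h : IsOpen[t] s) : IsClosed[t] sᶜ := by letI := t; exact isClosed_compl_iff.mpr h

private theorem int_compl {X : Type*} (t : TopologicalSpace X) (s : Set X) :
    @interior X t sᶜ = (@closure X t s)ᶜ := by letI := t; exact interior_compl

private theorem cl_compl {X : Type*} (t : TopologicalSpace X) (s : Set X) :
    @closure X t sᶜ = (@interior X t s)ᶜ := by letI := t; exact closure_compl

/-- for a pairwise zero-dimensional bitopological space,
`(B1,∪,∩,∅,X)` is a double p-algebra (every `u ∈ B1` has a pseudocomplement — a
greatest `w ∈ B1` with `u ∩ w = ∅` — and a dual pseudocomplement — a least `w ∈ B1`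
with `u ∪ w = X`) if and only if (1) `Int₁(v) ∈ B1` for every `v ∈ B2` and
(2) `Int₂(u) ∈ B2` for every `u ∈ B1`; and in that case the pseudocomplement is
`u* = Int₁(uᶜ) = Cl₁(u)ᶜ` and the dual pseudocomplement is `u⁺ = Int₂(u)ᶜ = Cl₂(uᶜ)`. -/
theorem B1_double_p_algebra_iff {X : Type*} (t1 t2 : TopologicalSpace X)
    (hzd : PairwiseZeroDim t1 t2) :
    ((∀ u ∈ B1 t1 t2,
        (∃ w, IsGreatest {v | v ∈ B1 t1 t2 ∧ u ∩ v = ∅} w) ∧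
        (∃ w, IsLeast {v | v ∈ B1 t1 t2 ∧ u ∪ v = Set.univ} w)) ↔
      ((∀ v ∈ B2 t1 t2, @interior X t1 v ∈ B1 t1 t2) ∧
       (∀ u ∈ B1 t1 t2, @interior X t2 u ∈ B2 t1 t2))) ∧
    (((∀ v ∈ B2 t1 t2, @interior X t1 v ∈ B1 t1 t2) ∧
      (∀ u ∈ B1 t1 t2, @interior X t2 u ∈ B2 t1 t2)) →
      ∀ u ∈ B1 t1 t2,
        IsGreatest {v | v ∈ B1 t1 t2 ∧ u ∩ v = ∅} (@interior X t1 uᶜ) ∧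
        @interior X t1 uᶜ = (closure[t1] u)ᶜ ∧
        IsLeast {v | v ∈ B1 t1 t2 ∧ u ∪ v = Set.univ} ((@interior X t2 u)ᶜ) ∧
        (@interior X t2 u)ᶜ = closure[t2] uᶜ) := by
  obtain ⟨hb1, hb2⟩ := hzd
  have cB1 : ∀ s ∈ B1 t1 t2, sᶜ ∈ B2 t1 t2 := fun s hs =>
    ⟨open_compl t2 hs.2, closed_compl t1 hs.1⟩
  have cB2 : ∀ s ∈ B2 t1 t2, sᶜ ∈ B1 t1 t2 := fun s hs =>
    ⟨open_compl t1 hs.2, closed_compl t2 hs.1⟩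
  have key : ((∀ v ∈ B2 t1 t2, @interior X t1 v ∈ B1 t1 t2) ∧
      (∀ u ∈ B1 t1 t2, @interior X t2 u ∈ B2 t1 t2)) →
      ∀ u ∈ B1 t1 t2,
        IsGreatest {v | v ∈ B1 t1 t2 ∧ u ∩ v = ∅} (@interior X t1 uᶜ) ∧
        IsLeast {v | v ∈ B1 t1 t2 ∧ u ∪ v = Set.univ} ((@interior X t2 u)ᶜ) := by
    rintro ⟨h1, h2⟩ u hu
    constructor
    · constructor
      · refine ⟨h1 _ (cB1 u hu), ?_⟩
        exact Set.disjoint_iff_inter_eq_empty.mp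
          (disjoint_compl_right.mono_right (int_subset t1 uᶜ))
      · rintro w ⟨⟨hw1, _⟩, hwe⟩
        exact int_maximal t1
          (Set.subset_compl_iff_disjoint_left.mpr (Set.disjoint_iff_inter_eq_empty.mpr hwe)) hw1
    · constructor
      · refine ⟨cB2 _ (h2 u hu), ?_⟩
        exact Set.compl_subset_iff_union.mp (Set.compl_subset_compl.mpr (int_subset t2 u))
      · rintro w ⟨⟨_, hw2⟩, hwe⟩
        have hsub : wᶜ ⊆ u := by
          have := Set.compl_subset_iff_union.mpr hwe
          intro x hx
          by_contra hxu
          exact hx (this hxu)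
        have h2' : wᶜ ⊆ @interior X t2 u := int_maximal t2 hsub (open_compl t2 hw2)
        calc (@interior X t2 u)ᶜ ⊆ wᶜᶜ := Set.compl_subset_compl.mpr h2'
          _ = w := compl_compl w
  refine ⟨⟨?_, fun h12 u hu => ⟨⟨_, (key h12 u hu).1⟩, ⟨_, (key h12 u hu).2⟩⟩⟩, ?_⟩
  · intro h
    constructor
    · intro v hv
      obtain ⟨w, hwmem, hwub⟩ := (h vᶜ (cB2 v hv)).1
      have heq : @interior X t1 v = w := by
        apply Set.Subset.antisymm
        · intro x hx
          obtain ⟨b, hbB, hxb, hbsub⟩ :=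
            basis_exists t1 hb1 hx (isOpen_int t1 v)
          have hbv : b ⊆ v := hbsub.trans (int_subset t1 v)
          have hd : vᶜ ∩ b = ∅ := Set.disjoint_iff_inter_eq_empty.mp
            (disjoint_compl_left.mono_right hbv)
          exact hwub ⟨hbB, hd⟩ hxb
        · have hwv : w ⊆ v := by
            have := Set.subset_compl_iff_disjoint_left.mpr
              (Set.disjoint_iff_inter_eq_empty.mpr hwmem.2)
            rwa [compl_compl] at this
          exact int_maximal t1 hwv hwmem.1.1
      rw [heq]; exact hwmem.1
    · intro u hu
      obtain ⟨w, hwmem, hwlb⟩ := (h u hu).2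
      have heq : @interior X t2 u = wᶜ := by
        apply Set.Subset.antisymm
        · intro x hx
          obtain ⟨b, hbB, hxb, hbsub⟩ :=
            basis_exists t2 hb2 hx (isOpen_int t2 u)
          have hbu : b ⊆ u := hbsub.trans (int_subset t2 u)
          have hbc : u ∪ bᶜ = Set.univ := by
            apply Set.eq_univ_of_univ_subset
            intro y _
            by_cases hy : y ∈ b
            · exact Or.inl (hbu hy)
            · exact Or.inr hy
          have hwb : w ⊆ bᶜ := hwlb ⟨cB2 b hbB, hbc⟩
          intro hxw
          exact hwb hxw hxb
        · have hsub : wᶜ ⊆ u := by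
            have := Set.compl_subset_iff_union.mpr hwmem.2
            intro x hx
            by_contra hxu
            exact hx (this hxu)
          exact int_maximal t2 hsub (open_compl t2 hwmem.1.2)
      rw [heq]; exact cB1 w hwmem.1
  · intro h12 u hu
    obtain ⟨hg, hl⟩ := key h12 u hu
    exact ⟨hg, int_compl t1 u, hl, (cl_compl t2 u).symm⟩
end

section
/- Let (X,t1,t2) be a pairwise zero-dimensional bitopological space such that (B1,∪,∩,∅,X) is a double p-algebra with pseudocomplement u* = Cl_1(u)^c and dual pseudocomplement u+ = Cl_2(u^c). Then for each u ∈ B1: (1) Cl_1(u)^c is t1-clopen if and only if u* ∪ u** = X, and (2) Cl_2(u^c)^c is t2-clopen if and only if u+ ∩ u++ = ∅. Hence B1 is a double Stone algebra if and only if for every u ∈ B1, Cl_1(u)^c is t1-clopen and Cl_2(u^c)^c is t2-clopen. -/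
open Topology

theorem aux_clopen_union {X : Type*} [TopologicalSpace X] (u : Set X) :
    IsClopen (closure u)ᶜ ↔ (closure u)ᶜ ∪ (closure (closure u)ᶜ)ᶜ = Set.univ := by
  constructor
  · intro h
    rw [h.isClosed.closure_eq]
    simp
  · intro h
    have hsub : closure ((closure u)ᶜ) ⊆ (closure u)ᶜ := by
      intro x hx
      rcases (h ▸ Set.mem_univ x : x ∈ (closure u)ᶜ ∪ (closure (closure u)ᶜ)ᶜ) with h1 | h2
      · exact h1
      · exact absurd hx h2
    exact ⟨isClosed_of_closure_subset hsub, isOpen_compl_iff.mpr isClosed_closure⟩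

theorem aux_clopen_inter {X : Type*} [TopologicalSpace X] (u : Set X) :
    IsClopen (closure uᶜ)ᶜ ↔ closure uᶜ ∩ closure ((closure uᶜ)ᶜ) = ∅ := by
  constructor
  · intro h
    rw [h.isClosed.closure_eq]
    simp
  · intro h
    have hsub : closure ((closure uᶜ)ᶜ) ⊆ (closure uᶜ)ᶜ := by
      intro x hx
      by_contra hc
      have : x ∈ closure uᶜ ∩ closure ((closure uᶜ)ᶜ) := ⟨not_not.mp hc, hx⟩
      rw [h] at this
      exact this
    exact ⟨isClosed_of_closure_subset hsub, isOpen_compl_iff.mpr isClosed_closure⟩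

/-- suppose `(X,t1,t2)` is pairwise zero-dimensional and
`(B1,∪,∩,∅,X)` is a double p-algebra with pseudocomplement `u* = Cl₁(u)ᶜ` and dual
pseudocomplement `u⁺ = Cl₂(uᶜ)`. Then for each `u ∈ B1`:
(1) `Cl₁(u)ᶜ` is `t1`-clopen iff `u* ∪ u** = X` (where `u** = Cl₁(Cl₁(u)ᶜ)ᶜ`), and
(2) `Cl₂(uᶜ)ᶜ` is `t2`-clopen iff `u⁺ ∩ u⁺⁺ = ∅` (where `u⁺⁺ = Cl₂(Cl₂(uᶜ)ᶜ)`).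
Hence `B1` is a double Stone algebra iff for every `u ∈ B1`, `Cl₁(u)ᶜ` is `t1`-clopen
and `Cl₂(uᶜ)ᶜ` is `t2`-clopen. -/
theorem B1_double_Stone_iff_clopen {X : Type*} (t1 t2 : TopologicalSpace X)
    (hzd : PairwiseZeroDim t1 t2)
    (hp : ∀ u ∈ B1 t1 t2,
      IsGreatest {v | v ∈ B1 t1 t2 ∧ u ∩ v = ∅} ((closure[t1] u)ᶜ) ∧
      IsLeast {v | v ∈ B1 t1 t2 ∧ u ∪ v = Set.univ} (closure[t2] uᶜ)) :
    (∀ u ∈ B1 t1 t2,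
      (@IsClopen X t1 ((closure[t1] u)ᶜ) ↔
        (closure[t1] u)ᶜ ∪ (closure[t1] ((closure[t1] u)ᶜ))ᶜ = Set.univ) ∧
      (@IsClopen X t2 ((closure[t2] uᶜ)ᶜ) ↔
        closure[t2] uᶜ ∩ closure[t2] ((closure[t2] uᶜ)ᶜ) = ∅)) ∧
    ((∀ u ∈ B1 t1 t2,
        @IsClopen X t1 ((closure[t1] u)ᶜ) ∧ @IsClopen X t2 ((closure[t2] uᶜ)ᶜ)) ↔
      (∀ u ∈ B1 t1 t2,
        (closure[t1] u)ᶜ ∪ (closure[t1] ((closure[t1] u)ᶜ))ᶜ = Set.univ ∧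
        closure[t2] uᶜ ∩ closure[t2] ((closure[t2] uᶜ)ᶜ) = ∅)) := by
  have main : ∀ u ∈ B1 t1 t2,
      (@IsClopen X t1 ((closure[t1] u)ᶜ) ↔
        (closure[t1] u)ᶜ ∪ (closure[t1] ((closure[t1] u)ᶜ))ᶜ = Set.univ) ∧
      (@IsClopen X t2 ((closure[t2] uᶜ)ᶜ) ↔
        closure[t2] uᶜ ∩ closure[t2] ((closure[t2] uᶜ)ᶜ) = ∅) :=
    fun u _ => ⟨@aux_clopen_union X t1 u, @aux_clopen_inter X t2 u⟩
  exact ⟨main, forall₂_congr fun u hu => and_congr (main u hu).1 (main u hu).2⟩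
end

section
/- Let (X,t1,t2) be a pairwise zero-dimensional bitopological space such that (B1,∪,∩,∅,X) is a double Stone algebra with pseudocomplement u* = Cl_1(u)^c and dual pseudocomplement u+ = Cl_2(u^c). Then for u ∈ B1: u is dense (u* = ∅) if and only if Bd_1(u) = u^c, and u is dually dense (u+ = X) if and only if Bd_2(u^c) = u. Consequently the core of B1 equals {u ∈ B1 : Bd_1(u) = u^c and Bd_2(u^c) = u}. -/
open Topology

lemma aux_open {X : Type*} [t : TopologicalSpace X] {u : Set X} (hu : IsOpen u) :
    (closure u)ᶜ = ∅ ↔ frontier u = uᶜ := by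
  have hfr : frontier u = closure u ∩ uᶜ := by
    rw [frontier, hu.interior_eq, Set.diff_eq]
  constructor
  · intro h
    have hcl : closure u = Set.univ := by
      have := compl_compl (closure u) ▸ congrArg compl h
      simpa using this
    rw [hfr, hcl, Set.univ_inter]
  · intro h
    have h1 : uᶜ ⊆ closure u := by
      rw [← h, hfr]; exact Set.inter_subset_left
    have hcl : closure u = Set.univ := by
      apply Set.eq_univ_of_forall
      intro x
      by_cases hx : x ∈ u
      · exact subset_closure hx
      · exact h1 hx
    rw [hcl, Set.compl_univ]

lemma aux_closed {X : Type*} [t : TopologicalSpace X] {u : Set X} (hu : IsClosed u) :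
    closure uᶜ = Set.univ ↔ frontier uᶜ = u := by
  have := aux_open (t := t) (u := uᶜ) hu.isOpen_compl
  rw [compl_compl] at this
  rw [← this]
  constructor
  · intro h; rw [h, Set.compl_univ]
  · intro h
    have := compl_compl (closure uᶜ) ▸ congrArg compl h
    simpa using this

/-- suppose `(X,t1,t2)` is pairwise zero-dimensional and
`(B1,∪,∩,∅,X)` is a double Stone algebra with pseudocomplement `u* = Cl₁(u)ᶜ` and
dual pseudocomplement `u⁺ = Cl₂(uᶜ)`. Then for `u ∈ B1`: `u` is dense (`u* = ∅`)
iff `Bd₁(u) = uᶜ`, and `u` is dually dense (`u⁺ = X`) iff `Bd₂(uᶜ) = u`; hence the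
core of `B1` equals `{u ∈ B1 : Bd₁(u) = uᶜ and Bd₂(uᶜ) = u}`. -/
theorem B1_dense_iff_boundary {X : Type*} (t1 t2 : TopologicalSpace X)
    (hzd : PairwiseZeroDim t1 t2)
    (hp : ∀ u ∈ B1 t1 t2,
      IsGreatest {v | v ∈ B1 t1 t2 ∧ u ∩ v = ∅} ((closure[t1] u)ᶜ) ∧
      IsLeast {v | v ∈ B1 t1 t2 ∧ u ∪ v = Set.univ} (closure[t2] uᶜ))
    (hstone : ∀ u ∈ B1 t1 t2,
      (closure[t1] u)ᶜ ∪ (closure[t1] ((closure[t1] u)ᶜ))ᶜ = Set.univ ∧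
      closure[t2] uᶜ ∩ closure[t2] ((closure[t2] uᶜ)ᶜ) = ∅) :
    (∀ u ∈ B1 t1 t2,
      ((closure[t1] u)ᶜ = ∅ ↔ @frontier X t1 u = uᶜ) ∧
      (closure[t2] uᶜ = Set.univ ↔ @frontier X t2 uᶜ = u)) ∧
    {u | u ∈ B1 t1 t2 ∧ (closure[t1] u)ᶜ = ∅ ∧ closure[t2] uᶜ = Set.univ} =
      {u | u ∈ B1 t1 t2 ∧ @frontier X t1 u = uᶜ ∧ @frontier X t2 uᶜ = u} := by
  have main : ∀ u ∈ B1 t1 t2,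
      ((closure[t1] u)ᶜ = ∅ ↔ @frontier X t1 u = uᶜ) ∧
      (closure[t2] uᶜ = Set.univ ↔ @frontier X t2 uᶜ = u) := by
    intro u hu
    exact ⟨aux_open (t := t1) hu.1, aux_closed (t := t2) hu.2⟩
  refine ⟨main, ?_⟩
  ext u
  simp only [Set.mem_setOf_eq]
  constructor
  · rintro ⟨hu, h1, h2⟩
    exact ⟨hu, (main u hu).1.mp h1, (main u hu).2.mp h2⟩
  · rintro ⟨hu, h1, h2⟩
    exact ⟨hu, (main u hu).1.mpr h1, (main u hu).2.mpr h2⟩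
end

section
/- A pairwise zero-dimensional bitopological space (X,t1,t2) admits operations making (B1,∪,∩,∅,X) a core regular double Stone algebra if and only if all of the following hold: (1) for every v ∈ B2, Int_1(v) ∈ B1 (giving the pseudocomplement u* = Int_1(u^c) = Cl_1(u)^c ∈ B1); (2) for every u ∈ B1, Int_2(u) ∈ B2 (giving the dual pseudocomplement u+ = Int_2(u)^c = Cl_2(u^c) ∈ B1); (3) for every u ∈ B1, Cl_1(u)^c is t1-clopen (giving the Stone identity u* ∪ u** = X); (4) for every u ∈ B1, Cl_2(u^c)^c = Int_2(u) is t2-clopen (giving the Stone identity u+ ∩ u++ = ∅); (5) for all u, w ∈ B1, Cl_1(u) = Cl_1(w) and Int_2(u) = Int_2(w) imply u = w (regularity); and (6) the set {u ∈ B1 : Bd_1(u) = u^c and Bd_2(u^c) = u} is nonempty (nonempty core). -/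
open Topology

/-- `(B1,∪,∩,∅,X)` admits operations `s`, `p` making it a core regular double Stone
algebra: `s` and `p` map `B1` into `B1`, `s u` is the pseudocomplement of `u`,
`p u` the dual pseudocomplement, the Stone identities hold, regularity holds, and
the core is nonempty. -/
def B1IsCRDSA {X : Type*} (t1 t2 : TopologicalSpace X) : Prop :=
  ∃ s p : Set X → Set X,
    (∀ u ∈ B1 t1 t2, s u ∈ B1 t1 t2 ∧ p u ∈ B1 t1 t2) ∧
    (∀ u ∈ B1 t1 t2, ∀ w ∈ B1 t1 t2,
      (w ∩ u = ∅ ↔ w ⊆ s u) ∧ (w ∪ u = Set.univ ↔ p u ⊆ w)) ∧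
    (∀ u ∈ B1 t1 t2, s u ∪ s (s u) = Set.univ ∧ p u ∩ p (p u) = ∅) ∧
    (∀ u ∈ B1 t1 t2, ∀ w ∈ B1 t1 t2, s u = s w → p u = p w → u = w) ∧
    (∃ k ∈ B1 t1 t2, s k = ∅ ∧ p k = Set.univ)

section Aux
variable {X : Type*} (t : TopologicalSpace X)

lemma aux_int_max {s u : Set X} (h : u ⊆ s) (hu : IsOpen[t] u) :
    u ⊆ @interior X t s := by letI := t; exact interior_maximal h hu

lemma aux_int_compl (s : Set X) : @interior X t sᶜ = (closure[t] s)ᶜ := by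
  letI := t; exact interior_compl

lemma aux_cl_compl (s : Set X) : closure[t] sᶜ = (@interior X t s)ᶜ := by
  letI := t; exact closure_compl

lemma aux_sub_cl (s : Set X) : s ⊆ closure[t] s := by letI := t; exact subset_closure

lemma aux_cl_min {s u : Set X} (h : s ⊆ u) (hu : IsClosed[t] u) :
    closure[t] s ⊆ u := by letI := t; exact closure_minimal h hu

lemma aux_cl_closed (s : Set X) : IsClosed[t] (closure[t] s) := by
  letI := t; exact isClosed_closure

lemma aux_int_open (s : Set X) : IsOpen[t] (@interior X t s) := by
  letI := t; exact isOpen_interior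

lemma aux_int_sub (s : Set X) : @interior X t s ⊆ s := by
  letI := t; exact interior_subset

lemma aux_closed_cl_eq {s : Set X} (h : IsClosed[t] s) : closure[t] s = s := by
  letI := t; exact h.closure_eq

lemma aux_cl_eq_closed {s : Set X} (h : closure[t] s = s) : IsClosed[t] s := by
  letI := t; exact closure_eq_iff_isClosed.mp h

lemma aux_open_frontier {s : Set X} (h : IsOpen[t] s) :
    @frontier X t s = closure[t] s \ s := by letI := t; exact h.frontier_eq

lemma aux_closed_compl_open {s : Set X} (h : IsClosed[t] s) : IsOpen[t] sᶜ := by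
  letI := t; exact h.isOpen_compl

lemma aux_open_compl_closed {s : Set X} (h : IsOpen[t] s) : IsClosed[t] sᶜ := by
  letI := t; exact h.isClosed_compl

lemma aux_basis_sub {B : Set (Set X)} (hb : @TopologicalSpace.IsTopologicalBasis X t B)
    {x : X} {u : Set X} (hx : x ∈ u) (hu : IsOpen[t] u) : ∃ v ∈ B, x ∈ v ∧ v ⊆ u := by
  letI := t; exact hb.exists_subset_of_mem_open hx hu

end Aux

/-- a pairwise zero-dimensional bitopological space `(X,t1,t2)` admits
operations making `(B1,∪,∩,∅,X)` a core regular double Stone algebra iff: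
(1) `Int₁(v) ∈ B1` for all `v ∈ B2` (giving `u* = Int₁(uᶜ) = Cl₁(u)ᶜ ∈ B1`);
(2) `Int₂(u) ∈ B2` for all `u ∈ B1` (giving `u⁺ = Int₂(u)ᶜ = Cl₂(uᶜ) ∈ B1`);
(3) `Cl₁(u)ᶜ` is `t1`-clopen for all `u ∈ B1`;
(4) `Cl₂(uᶜ)ᶜ = Int₂(u)` is `t2`-clopen for all `u ∈ B1`;
(5) `Cl₁(u) = Cl₁(w)` and `Int₂(u) = Int₂(w)` imply `u = w` for `u, w ∈ B1`;
(6) `{u ∈ B1 : Bd₁(u) = uᶜ and Bd₂(uᶜ) = u}` is nonempty. -/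


theorem B1_CRDSA_iff {X : Type*} (t1 t2 : TopologicalSpace X)
    (hzd : PairwiseZeroDim t1 t2) :
    B1IsCRDSA t1 t2 ↔
      ((∀ v ∈ B2 t1 t2, @interior X t1 v ∈ B1 t1 t2) ∧
       (∀ u ∈ B1 t1 t2, @interior X t2 u ∈ B2 t1 t2) ∧
       (∀ u ∈ B1 t1 t2, @IsClopen X t1 ((closure[t1] u)ᶜ)) ∧
       (∀ u ∈ B1 t1 t2, @IsClopen X t2 ((closure[t2] uᶜ)ᶜ)) ∧
       (∀ u ∈ B1 t1 t2, ∀ w ∈ B1 t1 t2,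
         closure[t1] u = closure[t1] w →
         @interior X t2 u = @interior X t2 w → u = w) ∧
       {u | u ∈ B1 t1 t2 ∧ @frontier X t1 u = uᶜ ∧ @frontier X t2 uᶜ = u}.Nonempty) := by
  constructor
  · rintro ⟨s, p, hmem, hpc, hstone, hreg, k, hk, hsk, hpk⟩
    -- s u = (closure₁ u)ᶜ
    have hs : ∀ u ∈ B1 t1 t2, s u = (closure[t1] u)ᶜ := by
      intro u hu
      have hsu := (hmem u hu).1
      have h1 : s u ∩ u = ∅ := ((hpc u hu (s u) hsu).1).mpr subset_rfl
      apply Set.Subset.antisymm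
      · have hsub : s u ⊆ uᶜ := by
          intro x hx hxu
          exact absurd h1 (Set.nonempty_iff_ne_empty.mp ⟨x, hx, hxu⟩)
        have := aux_int_max t1 hsub hsu.1
        rwa [aux_int_compl t1 u] at this
      · intro x hx
        have hxo : x ∈ @interior X t1 uᶜ := by
          rw [aux_int_compl t1 u]; exact hx
        obtain ⟨w, hw, hxw, hws⟩ :=
          aux_basis_sub t1 hzd.1 hxo (aux_int_open t1 uᶜ)
        have hwu : w ∩ u = ∅ := by
          apply Set.eq_empty_iff_forall_notMem.mpr
          intro y ⟨hyw, hyu⟩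
          exact (aux_int_sub t1 uᶜ (hws hyw)) hyu
        exact ((hpc u hu w hw).1).mp hwu hxw
    -- p u = closure₂ uᶜ
    have hp : ∀ u ∈ B1 t1 t2, p u = closure[t2] uᶜ := by
      intro u hu
      have hpu := (hmem u hu).2
      have h1 : p u ∪ u = Set.univ := ((hpc u hu (p u) hpu).2).mpr subset_rfl
      apply Set.Subset.antisymm
      · intro x hx
        by_contra hxc
        have hxi : x ∈ @interior X t2 u := by
          have : x ∈ (closure[t2] uᶜ)ᶜ := hxc
          rwa [aux_cl_compl t2 u, compl_compl] at this
        obtain ⟨v, hv, hxv, hvu⟩ :=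
          aux_basis_sub t2 hzd.2 hxi (aux_int_open t2 u)
        have hvB1 : vᶜ ∈ B1 t1 t2 :=
          ⟨aux_closed_compl_open t1 hv.2, aux_open_compl_closed t2 hv.1⟩
        have hcov : vᶜ ∪ u = Set.univ := by
          apply Set.eq_univ_of_forall
          intro y
          by_cases hy : y ∈ v
          · exact Or.inr (aux_int_sub t2 u (hvu hy))
          · exact Or.inl hy
        have := ((hpc u hu vᶜ hvB1).2).mp hcov hx
        exact this hxv
      · have hsub : uᶜ ⊆ p u := by
          intro x hx
          rcases (Set.eq_univ_iff_forall.mp h1 x) with h | h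
          · exact h
          · exact absurd h hx
        exact aux_cl_min t2 hsub hpu.2
    refine ⟨?_, ?_, ?_, ?_, ?_, ?_⟩
    · -- (1)
      intro v hv
      have hvc : vᶜ ∈ B1 t1 t2 :=
        ⟨aux_closed_compl_open t1 hv.2, aux_open_compl_closed t2 hv.1⟩
      have : @interior X t1 v = s vᶜ := by
        rw [hs vᶜ hvc, ← aux_int_compl t1 vᶜ, compl_compl]
      rw [this]
      exact (hmem vᶜ hvc).1
    · -- (2)
      intro u hu
      have : @interior X t2 u = (p u)ᶜ := by
        rw [hp u hu, aux_cl_compl t2 u, compl_compl]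
      rw [this]
      have hpu := (hmem u hu).2
      exact ⟨aux_closed_compl_open t2 hpu.2, aux_open_compl_closed t1 hpu.1⟩
    · -- (3)
      intro u hu
      have hsu := (hmem u hu).1
      have hst := (hstone u hu).1
      rw [hs (s u) hsu, hs u hu] at hst
      -- hst : (closure₁ u)ᶜ ∪ (closure₁ (closure₁ u)ᶜ)ᶜ = univ
      have hclosed : IsClosed[t1] ((closure[t1] u)ᶜ) := by
        have hsub : closure[t1] ((closure[t1] u)ᶜ) ⊆ (closure[t1] u)ᶜ := by
          intro x hx
          rcases Set.eq_univ_iff_forall.mp hst x with h | h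
          · exact h
          · exact absurd hx h
        have : closure[t1] ((closure[t1] u)ᶜ) = (closure[t1] u)ᶜ :=
          Set.Subset.antisymm hsub (aux_sub_cl t1 _)
        exact aux_cl_eq_closed t1 this
      exact ⟨hclosed, aux_closed_compl_open t1 (aux_cl_closed t1 u)⟩
    · -- (4)
      intro u hu
      have hpu := (hmem u hu).2
      have hst := (hstone u hu).2
      rw [hp (p u) hpu, hp u hu] at hst
      -- hst : closure₂ uᶜ ∩ closure₂ (closure₂ uᶜ)ᶜ = ∅
      have hclosed : IsClosed[t2] ((closure[t2] uᶜ)ᶜ) := by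
        have hsub : closure[t2] ((closure[t2] uᶜ)ᶜ) ⊆ (closure[t2] uᶜ)ᶜ := by
          intro x hx hx2
          exact absurd hst (Set.nonempty_iff_ne_empty.mp ⟨x, hx2, hx⟩)
        have : closure[t2] ((closure[t2] uᶜ)ᶜ) = (closure[t2] uᶜ)ᶜ :=
          Set.Subset.antisymm hsub (aux_sub_cl t2 _)
        exact aux_cl_eq_closed t2 this
      exact ⟨hclosed, aux_closed_compl_open t2 (aux_cl_closed t2 uᶜ)⟩
    · -- (5)
      intro u hu w hw hcl hint
      apply hreg u hu w hw
      · rw [hs u hu, hs w hw, hcl]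
      · rw [hp u hu, hp w hw, aux_cl_compl t2 u, aux_cl_compl t2 w, hint]
    · -- (6)
      refine ⟨k, hk, ?_, ?_⟩
      · have hcl : closure[t1] k = Set.univ := by
          have : (closure[t1] k)ᶜ = ∅ := by rw [← hs k hk]; exact hsk
          rwa [Set.compl_empty_iff] at this
        rw [aux_open_frontier t1 hk.1, hcl]
        exact (Set.compl_eq_univ_diff k).symm
      · have hcl : closure[t2] kᶜ = Set.univ := by rw [← hp k hk]; exact hpk
        rw [aux_open_frontier t2 (aux_closed_compl_open t2 hk.2), hcl]
        rw [← Set.compl_eq_univ_diff, compl_compl]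
  · rintro ⟨h1, h2, h3, h4, h5, k, hk, hf1, hf2⟩
    refine ⟨fun u => (closure[t1] u)ᶜ, fun u => closure[t2] uᶜ, ?_, ?_, ?_, ?_, ?_⟩ <;>
      beta_reduce
    · intro u hu
      constructor
      · constructor
        · exact aux_closed_compl_open t1 (aux_cl_closed t1 u)
        · have : (closure[t1] u)ᶜ = @interior X t1 uᶜ := (aux_int_compl t1 u).symm
          rw [this]
          exact (h1 uᶜ ⟨aux_closed_compl_open t2 hu.2, aux_open_compl_closed t1 hu.1⟩).2
      · constructor
        · have : closure[t2] uᶜ = (@interior X t2 u)ᶜ := aux_cl_compl t2 u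
          rw [this]
          exact aux_closed_compl_open t1 (h2 u hu).2
        · exact aux_cl_closed t2 uᶜ
    · intro u hu w hw
      constructor
      · constructor
        · intro h
          have hsub : w ⊆ uᶜ := by
            intro x hx hxu
            exact absurd h (Set.nonempty_iff_ne_empty.mp ⟨x, hx, hxu⟩)
          have := aux_int_max t1 hsub hw.1
          rwa [aux_int_compl t1 u] at this
        · intro h
          apply Set.eq_empty_iff_forall_notMem.mpr
          intro x ⟨hxw, hxu⟩
          exact (h hxw) (aux_sub_cl t1 u hxu)
      · constructor
        · intro h
          apply aux_cl_min t2 ?_ hw.2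
          intro x hx
          rcases Set.eq_univ_iff_forall.mp h x with h' | h'
          · exact h'
          · exact absurd h' hx
        · intro h
          apply Set.eq_univ_of_forall
          intro x
          by_cases hx : x ∈ u
          · exact Or.inr hx
          · exact Or.inl (h (aux_sub_cl t2 uᶜ hx))
    · intro u hu
      constructor
      · have h3u : closure[t1] ((closure[t1] u)ᶜ) = (closure[t1] u)ᶜ :=
          aux_closed_cl_eq t1 (h3 u hu).1
        rw [h3u, compl_compl, Set.compl_union_self]
      · have h4u : closure[t2] ((closure[t2] uᶜ)ᶜ) = (closure[t2] uᶜ)ᶜ :=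
          aux_closed_cl_eq t2 (h4 u hu).1
        rw [h4u, Set.inter_compl_self]
    · intro u hu w hw hsuw hpuw
      apply h5 u hu w hw
      · exact compl_injective hsuw
      · have : (@interior X t2 u)ᶜ = (@interior X t2 w)ᶜ := by
          rw [← aux_cl_compl t2 u, ← aux_cl_compl t2 w, hpuw]
        exact compl_injective this
    · refine ⟨k, hk, ?_, ?_⟩
      · have hcl : closure[t1] k = Set.univ := by
          apply Set.eq_univ_of_forall
          intro x
          by_cases hx : x ∈ k
          · exact aux_sub_cl t1 k hx
          · have : x ∈ @frontier X t1 k := by rw [hf1]; exact hx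
            rw [aux_open_frontier t1 hk.1] at this
            exact this.1
        rw [hcl, Set.compl_univ]
      · apply Set.eq_univ_of_forall
        intro x
        by_cases hx : x ∈ k
        · have : x ∈ @frontier X t2 kᶜ := by rw [hf2]; exact hx
          rw [aux_open_frontier t2 (aux_closed_compl_open t2 hk.2)] at this
          exact this.1
        · exact aux_sub_cl t2 kᶜ hx
end

section
/- Let (X,t1,t2) and (Y,γ1,γ2) be bitopological spaces whose lattices of basis sets B1 (for X) and D1 (for Y) are core regular double Stone algebras with pseudocomplement u* = Cl_1(u)^c and dual pseudocomplement u+ = Cl_2(u^c) (closures taken in the respective space), and let f : X → Y be bi-continuous (continuous from t_i to γ_i for i = 1,2). Then the induced map f^{-1} : D1 → B1 is a CRDSA homomorphism if and only if for every u ∈ D1, f^{-1}(Bd_1(u)) ⊆ Cl_1(f^{-1}(u)) and f^{-1}(Bd_2(u^c)) ⊆ Cl_2(f^{-1}(u^c)), where Bd_i is taken in Y and Cl_i of the preimages is taken in X. -/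
open Topology

/-- The lattice `(B1,∪,∩,∅,X)` of basis sets of the bitopological space `(X,t1,t2)`
is a core regular double Stone algebra with pseudocomplement `u* = Cl₁(u)ᶜ` and
dual pseudocomplement `u⁺ = Cl₂(uᶜ)`. -/
def IsCRDSABase {X : Type*} (t1 t2 : TopologicalSpace X) : Prop :=
  (∀ u ∈ B1 t1 t2, (closure[t1] u)ᶜ ∈ B1 t1 t2 ∧ closure[t2] uᶜ ∈ B1 t1 t2) ∧
  (∀ u ∈ B1 t1 t2, ∀ w ∈ B1 t1 t2,
    (w ∩ u = ∅ ↔ w ⊆ (closure[t1] u)ᶜ) ∧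
    (w ∪ u = Set.univ ↔ closure[t2] uᶜ ⊆ w)) ∧
  (∀ u ∈ B1 t1 t2,
    (closure[t1] u)ᶜ ∪ (closure[t1] ((closure[t1] u)ᶜ))ᶜ = Set.univ ∧
    closure[t2] uᶜ ∩ closure[t2] ((closure[t2] uᶜ)ᶜ) = ∅) ∧
  (∀ u ∈ B1 t1 t2, ∀ w ∈ B1 t1 t2,
    (closure[t1] u)ᶜ = (closure[t1] w)ᶜ → closure[t2] uᶜ = closure[t2] wᶜ → u = w) ∧
  (∃ k ∈ B1 t1 t2, (closure[t1] k)ᶜ = ∅ ∧ closure[t2] kᶜ = Set.univ)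

/-! Preimages always preserve the lattice operations, and under bi-continuity they map `D1`
into `B1`; so the only content is that `f ⁻¹'` commutes with `Cl₁` on `D1` and with `Cl₂` on
complements of `D1`. Since `Cl u = u ∪ Bd u` and continuity already gives
`Cl (f ⁻¹' u) ⊆ f ⁻¹' (Cl u)`, this commutation is exactly the boundary condition. -/

theorem Continuous.preimage_closure_eq_iff_preimage_frontier_subset {X Y : Type*}
    [TopologicalSpace X] [TopologicalSpace Y] {f : X → Y} (hf : Continuous f) (u : Set Y) :
    f ⁻¹' closure u = closure (f ⁻¹' u) ↔ f ⁻¹' frontier u ⊆ closure (f ⁻¹' u) := by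
  refine ⟨fun h => h ▸ Set.preimage_mono frontier_subset_closure, fun h => ?_⟩
  refine (Set.Subset.antisymm ?_ (hf.closure_preimage_subset u))
  rw [closure_eq_self_union_frontier, Set.preimage_union]
  exact Set.union_subset subset_closure h

theorem preimage_mem_B1 {X Y : Type*} {t1 t2 : TopologicalSpace X} {γ1 γ2 : TopologicalSpace Y}
    {f : X → Y} (hf1 : Continuous[t1, γ1] f) (hf2 : Continuous[t2, γ2] f)
    {u : Set Y} (hu : u ∈ B1 γ1 γ2) : f ⁻¹' u ∈ B1 t1 t2 :=
  ⟨@IsOpen.preimage X Y t1 γ1 f hf1 u hu.1, @IsClosed.preimage X Y t2 γ2 f hf2 u hu.2⟩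

theorem preimage_CRDSA_hom_iff_boundary_general {X Y : Type*}
    (t1 t2 : TopologicalSpace X) (γ1 γ2 : TopologicalSpace Y)
    (f : X → Y) (hf1 : Continuous[t1, γ1] f) (hf2 : Continuous[t2, γ2] f) :
    -- `f ⁻¹' ·` is a CRDSA homomorphism from D1 to B1:
    ((∀ u ∈ B1 γ1 γ2, f ⁻¹' u ∈ B1 t1 t2) ∧
     (∀ u ∈ B1 γ1 γ2, ∀ w ∈ B1 γ1 γ2, f ⁻¹' (u ∪ w) = f ⁻¹' u ∪ f ⁻¹' w) ∧
     (∀ u ∈ B1 γ1 γ2, ∀ w ∈ B1 γ1 γ2, f ⁻¹' (u ∩ w) = f ⁻¹' u ∩ f ⁻¹' w) ∧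
     f ⁻¹' (∅ : Set Y) = (∅ : Set X) ∧
     f ⁻¹' (Set.univ : Set Y) = Set.univ ∧
     (∀ u ∈ B1 γ1 γ2, f ⁻¹' ((closure[γ1] u)ᶜ) = (closure[t1] (f ⁻¹' u))ᶜ) ∧
     (∀ u ∈ B1 γ1 γ2, f ⁻¹' (closure[γ2] uᶜ) = closure[t2] (f ⁻¹' uᶜ))) ↔
    (∀ u ∈ B1 γ1 γ2,
      f ⁻¹' (@frontier Y γ1 u) ⊆ closure[t1] (f ⁻¹' u) ∧
      f ⁻¹' (@frontier Y γ2 uᶜ) ⊆ closure[t2] (f ⁻¹' uᶜ)) := by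
  have hcl₁ (u : Set Y) := @hf1.preimage_closure_eq_iff_preimage_frontier_subset _ _ t1 γ1 _ u
  have hcl₂ (u : Set Y) := @hf2.preimage_closure_eq_iff_preimage_frontier_subset _ _ t2 γ2 _ uᶜ
  simp only [Set.preimage_compl, compl_inj_iff] at hcl₂ ⊢
  simp only [← hcl₁, ← hcl₂, forall_and]
  exact ⟨fun h => ⟨h.2.2.2.2.2.1, h.2.2.2.2.2.2⟩, fun h =>
    ⟨fun _ => preimage_mem_B1 hf1 hf2, fun _ _ _ _ => rfl, fun _ _ _ _ => rfl, rfl, rfl, h⟩⟩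

/-- let `(X,t1,t2)` and `(Y,γ1,γ2)` be bitopological spaces whose
lattices of basis sets `B1` (for `X`) and `D1` (for `Y`) are core regular double
Stone algebras with `u* = Cl₁(u)ᶜ` and `u⁺ = Cl₂(uᶜ)`, and let `f : X → Y` be
bi-continuous. Then the induced map `u ↦ f ⁻¹' u` from `D1` to `B1` is a CRDSA
homomorphism (it preserves ∪, ∩, ∅, the whole space, and the (dual)
pseudocomplements) iff for every `u ∈ D1`, `f ⁻¹' (Bd₁ u) ⊆ Cl₁ (f ⁻¹' u)` and
`f ⁻¹' (Bd₂ uᶜ) ⊆ Cl₂ (f ⁻¹' uᶜ)`. -/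
theorem preimage_CRDSA_hom_iff_boundary {X Y : Type*}
    (t1 t2 : TopologicalSpace X) (γ1 γ2 : TopologicalSpace Y)
    (hX : IsCRDSABase t1 t2) (hY : IsCRDSABase γ1 γ2)
    (f : X → Y) (hf1 : Continuous[t1, γ1] f) (hf2 : Continuous[t2, γ2] f) :
    -- `f ⁻¹' ·` is a CRDSA homomorphism from D1 to B1:
    ((∀ u ∈ B1 γ1 γ2, f ⁻¹' u ∈ B1 t1 t2) ∧
     (∀ u ∈ B1 γ1 γ2, ∀ w ∈ B1 γ1 γ2, f ⁻¹' (u ∪ w) = f ⁻¹' u ∪ f ⁻¹' w) ∧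
     (∀ u ∈ B1 γ1 γ2, ∀ w ∈ B1 γ1 γ2, f ⁻¹' (u ∩ w) = f ⁻¹' u ∩ f ⁻¹' w) ∧
     f ⁻¹' (∅ : Set Y) = (∅ : Set X) ∧
     f ⁻¹' (Set.univ : Set Y) = Set.univ ∧
     (∀ u ∈ B1 γ1 γ2, f ⁻¹' ((closure[γ1] u)ᶜ) = (closure[t1] (f ⁻¹' u))ᶜ) ∧
     (∀ u ∈ B1 γ1 γ2, f ⁻¹' (closure[γ2] uᶜ) = closure[t2] (f ⁻¹' uᶜ))) ↔
    (∀ u ∈ B1 γ1 γ2,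
      f ⁻¹' (@frontier Y γ1 u) ⊆ closure[t1] (f ⁻¹' u) ∧
      f ⁻¹' (@frontier Y γ2 uᶜ) ⊆ closure[t2] (f ⁻¹' uᶜ)) :=
  preimage_CRDSA_hom_iff_boundary_general t1 t2 γ1 γ2 f hf1 hf2
end

section
/- The category of core regular double Stone algebras (objects: CRDSAs; morphisms: CRDSA homomorphisms) is dually equivalent to the category of core regular double pairwise Stone spaces, whose objects are the pairwise Stone spaces (X,t1,t2) satisfying: (1) Int_1(v) ∈ B1 for all v ∈ B2; (2) Int_2(u) ∈ B2 for all u ∈ B1; (3) Cl_1(u)^c is t1-clopen for all u ∈ B1; (4) Cl_2(u^c)^c is t2-clopen for all u ∈ B1; (5) Cl_1(u) = Cl_1(w) and Int_2(u) = Int_2(w) imply u = w for u, w ∈ B1; (6) {u ∈ B1 : Bd_1(u) = u^c and Bd_2(u^c) = u} ≠ ∅; and whose morphisms are the bi-continuous maps f with f^{-1}(Bd_1(u)) ⊆ Cl_1(f^{-1}(u)) and f^{-1}(Bd_2(u^c)) ⊆ Cl_2(f^{-1}(u^c)) for every basis element u of the codomain. -/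
open Topology CategoryTheory

open DoubleStoneAlgebra

/-- A CRDSA homomorphism: a map preserving ⊔, ⊓, *, ⁺, ⊥ and ⊤. -/
def IsCRDSAHom {A B : Type*} [CRDSA A] [CRDSA B] (f : A → B) : Prop :=
  (∀ x y : A, f (x ⊔ y) = f x ⊔ f y) ∧
  (∀ x y : A, f (x ⊓ y) = f x ⊓ f y) ∧
  (∀ x : A, f (pstar x) = pstar (f x)) ∧
  (∀ x : A, f (pplus x) = pplus (f x)) ∧
  f ⊥ = ⊥ ∧ f ⊤ = ⊤

/-- The category of core regular double Stone algebras with CRDSA homomorphisms. -/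
structure CRDSACat where
  carrier : Type
  [str : CRDSA carrier]

attribute [instance] CRDSACat.str

instance : Category CRDSACat where
  Hom A B := {f : A.carrier → B.carrier // IsCRDSAHom f}
  id A := ⟨id, fun _ _ => rfl, fun _ _ => rfl, fun _ => rfl, fun _ => rfl, rfl, rfl⟩
  comp {A B C} f g := by
    refine ⟨g.1 ∘ f.1, ?_⟩
    obtain ⟨f1, f2, f3, f4, f5, f6⟩ := f.2
    obtain ⟨g1, g2, g3, g4, g5, g6⟩ := g.2
    exact ⟨fun x y => by simp [Function.comp, f1, g1],
      fun x y => by simp [Function.comp, f2, g2],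
      fun x => by simp [Function.comp, f3, g3],
      fun x => by simp [Function.comp, f4, g4],
      by simp [Function.comp, f5, g5],
      by simp [Function.comp, f6, g6]⟩
  id_comp f := Subtype.ext rfl
  comp_id f := Subtype.ext rfl
  assoc f g h := Subtype.ext rfl

/-- A core regular double pairwise Stone space: a pairwise Stone space (pairwise
compact, pairwise Hausdorff, pairwise zero-dimensional bitopological space)
satisfying conditions (1)–(6) making its basis lattice `B1` a core regular double
Stone algebra. -/
structure CRDPStoneSpace where
  X : Type
  t1 : TopologicalSpace X
  t2 : TopologicalSpace X
  /-- pairwise compact: every cover by sets open in `t1` or `t2` has a finite subcover -/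
  pairwise_compact : ∀ C : Set (Set X), (∀ u ∈ C, IsOpen[t1] u ∨ IsOpen[t2] u) →
    ⋃₀ C = Set.univ → ∃ F : Finset (Set X), ↑F ⊆ C ∧ ⋃₀ (↑F : Set (Set X)) = Set.univ
  /-- pairwise Hausdorff -/
  pairwise_hausdorff : ∀ x y : X, x ≠ y → ∃ U V : Set X, Disjoint U V ∧ x ∈ U ∧ y ∈ V ∧
    ((IsOpen[t1] U ∧ IsOpen[t2] V) ∨ (IsOpen[t2] U ∧ IsOpen[t1] V))
  /-- pairwise zero-dimensional -/
  basis1 : @TopologicalSpace.IsTopologicalBasis X t1 (B1 t1 t2)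
  basis2 : @TopologicalSpace.IsTopologicalBasis X t2 (B2 t1 t2)
  cond1 : ∀ v ∈ B2 t1 t2, @interior X t1 v ∈ B1 t1 t2
  cond2 : ∀ u ∈ B1 t1 t2, @interior X t2 u ∈ B2 t1 t2
  cond3 : ∀ u ∈ B1 t1 t2, @IsClopen X t1 ((closure[t1] u)ᶜ)
  cond4 : ∀ u ∈ B1 t1 t2, @IsClopen X t2 ((closure[t2] uᶜ)ᶜ)
  cond5 : ∀ u ∈ B1 t1 t2, ∀ w ∈ B1 t1 t2,
    closure[t1] u = closure[t1] w → @interior X t2 u = @interior X t2 w → u = w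
  cond6 : {u | u ∈ B1 t1 t2 ∧ @frontier X t1 u = uᶜ ∧ @frontier X t2 uᶜ = u}.Nonempty

/-- The morphism property: bi-continuity together with the boundary conditions
`f ⁻¹' (Bd₁ u) ⊆ Cl₁ (f ⁻¹' u)` and `f ⁻¹' (Bd₂ uᶜ) ⊆ Cl₂ (f ⁻¹' uᶜ)` for every
basis element `u` of the codomain. -/
def IsCRDPStoneMap (S T : CRDPStoneSpace) (f : S.X → T.X) : Prop :=
  Continuous[S.t1, T.t1] f ∧ Continuous[S.t2, T.t2] f ∧
  ∀ u ∈ B1 T.t1 T.t2,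
    f ⁻¹' (@frontier T.X T.t1 u) ⊆ @closure S.X S.t1 (f ⁻¹' u) ∧
    f ⁻¹' (@frontier T.X T.t2 uᶜ) ⊆ @closure S.X S.t2 (f ⁻¹' uᶜ)

private lemma preimage_closure_aux {W Y : Type*} (tW : TopologicalSpace W)
    (tY : TopologicalSpace Y) (f : W → Y) (v : Set Y)
    (h : f ⁻¹' (@frontier Y tY v) ⊆ @closure W tW (f ⁻¹' v)) :
    f ⁻¹' (@closure Y tY v) ⊆ @closure W tW (f ⁻¹' v) := by
  rw [@closure_eq_self_union_frontier Y tY v, Set.preimage_union]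
  exact Set.union_subset (@subset_closure W tW (f ⁻¹' v)) h

instance : Category CRDPStoneSpace where
  Hom S T := {f : S.X → T.X // IsCRDPStoneMap S T f}
  id S := ⟨id, @continuous_id S.X S.t1, @continuous_id S.X S.t2, fun u _ =>
    ⟨@frontier_subset_closure S.X S.t1 u, @frontier_subset_closure S.X S.t2 uᶜ⟩⟩
  comp {S T U} f g := by
    refine ⟨g.1 ∘ f.1, ?_⟩
    obtain ⟨fc1, fc2, fb⟩ := f.2
    obtain ⟨gc1, gc2, gb⟩ := g.2
    refine ⟨@Continuous.comp S.X T.X U.X S.t1 T.t1 U.t1 f.1 g.1 gc1 fc1,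
      @Continuous.comp S.X T.X U.X S.t2 T.t2 U.t2 f.1 g.1 gc2 fc2, ?_⟩
    intro u hu
    -- `v := g ⁻¹' u` belongs to the basis lattice of `T`
    have hv : g.1 ⁻¹' u ∈ B1 T.t1 T.t2 :=
      ⟨@Continuous.isOpen_preimage T.X U.X T.t1 U.t1 g.1 gc1 u hu.1,
       @IsClosed.preimage T.X U.X T.t2 U.t2 g.1 gc2 u hu.2⟩
    constructor
    · calc (g.1 ∘ f.1) ⁻¹' (@frontier U.X U.t1 u)
          = f.1 ⁻¹' (g.1 ⁻¹' (@frontier U.X U.t1 u)) := rfl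
        _ ⊆ f.1 ⁻¹' (@closure T.X T.t1 (g.1 ⁻¹' u)) := Set.preimage_mono (gb u hu).1
        _ ⊆ @closure S.X S.t1 (f.1 ⁻¹' (g.1 ⁻¹' u)) :=
            preimage_closure_aux S.t1 T.t1 f.1 _ (fb _ hv).1
    · calc (g.1 ∘ f.1) ⁻¹' (@frontier U.X U.t2 uᶜ)
          = f.1 ⁻¹' (g.1 ⁻¹' (@frontier U.X U.t2 uᶜ)) := rfl
        _ ⊆ f.1 ⁻¹' (@closure T.X T.t2 (g.1 ⁻¹' uᶜ)) := Set.preimage_mono (gb u hu).2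
        _ ⊆ @closure S.X S.t2 (f.1 ⁻¹' (g.1 ⁻¹' uᶜ)) := by
            have := (fb _ hv).2
            rw [Set.preimage_compl] at this ⊢
            exact preimage_closure_aux S.t2 T.t2 f.1 _ this
  id_comp f := Subtype.ext rfl
  comp_id f := Subtype.ext rfl
  assoc f g h := Subtype.ext rfl

/-!
The duality is a Stone–Priestley duality. A CRDSA `A` is represented on its spectrum, the bounded
lattice homomorphisms `A → Bool` (prime filters), with `t1` generated by the sets
`V x = {g | g x}` and `t2` by their complements. The prime filter theorem makes `x ↦ V x`
injective; the join of `t1` and `t2` is coarser than pointwise convergence, hence compact, so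
the `t1`-open `t2`-closed sets are exactly the `V x`; and `Int₁ (V x)ᶜ = V x*`,
`Cl₂ (V x)ᶜ = V x⁺`. Hence `A ≅ B1 (Spec A)` and the spectrum satisfies (1)–(6). Conversely
`B1` of a space is a CRDSA by (1)–(6), and evaluation `X → Spec B1` is injective by pairwise
Hausdorffness and surjective by pairwise compactness. Finally a map is a morphism exactly when
taking preimages is a CRDSA homomorphism between the `B1`-algebras, which makes both
constructions functorial and the two isomorphisms natural.
-/

open Set TopologicalSpace Opposite

namespace DoubleStoneAlgebra

variable {α : Type*} [DoubleStoneAlgebra α]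

lemma pstar_inf_self (x : α) : pstar x ⊓ x = ⊥ := (pstar_spec x _).mpr le_rfl

lemma pplus_sup_self (x : α) : pplus x ⊔ x = ⊤ := (pplus_spec x _).mpr le_rfl

lemma isCompl_pstar_pstar_pstar (x : α) : IsCompl (pstar x) (pstar (pstar x)) :=
  ⟨disjoint_iff.mpr (by rw [inf_comm, pstar_inf_self]), codisjoint_iff.mpr (stone x)⟩

lemma isCompl_pplus_pplus_pplus (x : α) : IsCompl (pplus x) (pplus (pplus x)) :=
  ⟨disjoint_iff.mpr (stone_dual x), codisjoint_iff.mpr (by rw [sup_comm, pplus_sup_self])⟩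

end DoubleStoneAlgebra

namespace IsCRDSAHom

variable {A B : Type*} [CRDSA A] [CRDSA B]

def toBoundedLatticeHom {f : A → B} (hf : IsCRDSAHom f) : BoundedLatticeHom A B where
  toFun := f
  map_sup' := hf.1
  map_inf' := hf.2.1
  map_bot' := hf.2.2.2.2.1
  map_top' := hf.2.2.2.2.2

lemma symm {e : A ≃ B} (he : IsCRDSAHom e) : IsCRDSAHom e.symm := by
  obtain ⟨hsup, hinf, hstar, hplus, hbot, htop⟩ := he
  refine ⟨fun x y => ?_, fun x y => ?_, fun x => ?_, fun x => ?_, ?_, ?_⟩ <;>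
    apply e.injective <;> simp [*]

end IsCRDSAHom

namespace CRDSACat

noncomputable def isoOfBijective {A B : CRDSACat} (f : A ⟶ B) (hf : Function.Bijective f.1) :
    A ≅ B where
  hom := f
  inv := ⟨(Equiv.ofBijective _ hf).symm, IsCRDSAHom.symm (e := Equiv.ofBijective _ hf) f.2⟩
  hom_inv_id := Subtype.ext (funext (Equiv.ofBijective _ hf).symm_apply_apply)
  inv_hom_id := Subtype.ext (funext (Equiv.ofBijective _ hf).apply_symm_apply)

end CRDSACat

local notation "interior[" t "]" => @interior _ t

section Bitopology

variable {X : Type*} {t1 t2 : TopologicalSpace X}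

def IsPairwiseCompact (t1 t2 : TopologicalSpace X) : Prop :=
  ∀ C : Set (Set X), (∀ u ∈ C, IsOpen[t1] u ∨ IsOpen[t2] u) →
    ⋃₀ C = Set.univ → ∃ F : Finset (Set X), ↑F ⊆ C ∧ ⋃₀ (↑F : Set (Set X)) = Set.univ

/-- The forward direction is Alexander's subbasis theorem. -/
theorem isPairwiseCompact_iff_compactSpace_inf :
    IsPairwiseCompact t1 t2 ↔ @CompactSpace X (t1 ⊓ t2) := by
  have hgen : t1 ⊓ t2 = generateFrom {s | IsOpen[t1] s ∨ IsOpen[t2] s} := by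
    rw [ofPred_or, generateFrom_union, generateFrom_setOfPred_isOpen,
      generateFrom_setOfPred_isOpen]
  let := t1 ⊓ t2
  constructor
  · intro h
    refine compactSpace_generateFrom hgen fun P hP hcov => ?_
    obtain ⟨F, hFP, hF⟩ := h P hP hcov
    exact ⟨F, hFP, F.finite_toSet, hF⟩
  · intro h C hC hcov
    have hopen : ∀ u ∈ C, IsOpen u := fun u hu =>
      (hC u hu).elim (·.mono inf_le_left) (·.mono inf_le_right)
    obtain ⟨F, hFC, hF, hFcov⟩ := isCompact_univ.elim_finite_subcover_image (c := id) hopen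
      (by simpa [← sUnion_eq_biUnion] using hcov.ge)
    refine ⟨hF.toFinset, by simpa using hFC, univ_subset_iff.mp ?_⟩
    simpa [sUnion_eq_biUnion] using hFcov

lemma inter_mem_B1 {u v : Set X} (hu : u ∈ B1 t1 t2) (hv : v ∈ B1 t1 t2) :
    u ∩ v ∈ B1 t1 t2 :=
  ⟨@IsOpen.inter _ t1 _ _ hu.1 hv.1, @IsClosed.inter _ _ _ t2 hu.2 hv.2⟩

lemma union_mem_B1 {u v : Set X} (hu : u ∈ B1 t1 t2) (hv : v ∈ B1 t1 t2) :
    u ∪ v ∈ B1 t1 t2 :=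
  ⟨@IsOpen.union _ _ _ t1 hu.1 hv.1, @IsClosed.union _ _ _ t2 hu.2 hv.2⟩

lemma empty_mem_B1 : ∅ ∈ B1 t1 t2 := ⟨@isOpen_empty _ t1, @isClosed_empty _ t2⟩

lemma univ_mem_B1 : univ ∈ B1 t1 t2 := ⟨@isOpen_univ _ t1, @isClosed_univ _ t2⟩

lemma compl_mem_B1_iff {u : Set X} : uᶜ ∈ B1 t1 t2 ↔ u ∈ B2 t1 t2 := by
  rw [B1, B2, mem_ofPred_eq, mem_ofPred_eq, @isOpen_compl_iff _ _ t1, @isClosed_compl_iff _ t2,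
    and_comm]

lemma compl_mem_B2_iff {u : Set X} : uᶜ ∈ B2 t1 t2 ↔ u ∈ B1 t1 t2 := by
  rw [← compl_mem_B1_iff, compl_compl]

end Bitopology

abbrev LatticeSpectrum (α : Type*) [Lattice α] [BoundedOrder α] : Type _ :=
  BoundedLatticeHom α Bool

namespace LatticeSpectrum

variable {α : Type*} [DistribLattice α] [BoundedOrder α]

theorem exists_of_not_le {x y : α} (h : ¬ x ≤ y) : ∃ g : LatticeSpectrum α, g x ∧ ¬ g y := by
  classical
  have hdisj : Disjoint (Order.PFilter.principal x : Set α) (Order.Ideal.principal y) :=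
    disjoint_left.mpr fun z hxz hzy => h ((Order.PFilter.mem_principal.mp hxz).trans hzy)
  obtain ⟨J, hJ, hyJ, hxJ⟩ := DistribLattice.prime_ideal_of_disjoint_filter_ideal hdisj
  have hinf : ∀ a b, a ⊓ b ∈ J ↔ a ∈ J ∨ b ∈ J := fun a b =>
    ⟨hJ.mem_or_mem, fun hab => hab.elim (J.lower inf_le_left) (J.lower inf_le_right)⟩
  refine ⟨{ toFun := fun z => decide (z ∉ J)
            map_sup' := fun a b => by simp [Order.Ideal.sup_mem_iff]
            map_inf' := fun a b => by simp [hinf]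
            map_bot' := by simp
            map_top' := by simpa using hJ.top_notMem }, ?_, ?_⟩
  · simpa using disjoint_left.mp hxJ (Order.PFilter.mem_principal.mpr le_rfl)
  · simpa using hyJ (Order.Ideal.mem_principal.mpr le_rfl)

def basicOpen (x : α) : Set (LatticeSpectrum α) := {g | g x}

@[simp]
lemma mem_basicOpen {x : α} {g : LatticeSpectrum α} : g ∈ basicOpen x ↔ g x := Iff.rfl

lemma basicOpen_sup (x y : α) : basicOpen (x ⊔ y) = basicOpen x ∪ basicOpen y := by
  ext g; simp [map_sup]

lemma basicOpen_inf (x y : α) : basicOpen (x ⊓ y) = basicOpen x ∩ basicOpen y := by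
  ext g; simp [map_inf]

lemma basicOpen_bot : basicOpen (⊥ : α) = ∅ := by ext g; simp [map_bot]

lemma basicOpen_top : basicOpen (⊤ : α) = univ := by ext g; simp [map_top]

lemma basicOpen_finset_sup {ι : Type*} (s : Finset ι) (f : ι → α) :
    basicOpen (s.sup f) = ⋃ i ∈ s, basicOpen (f i) := by
  classical
  induction s using Finset.induction_on with
  | empty => simp [basicOpen_bot]
  | insert i s _ ih => simp [basicOpen_sup, ih]

lemma basicOpen_subset_basicOpen {x y : α} : basicOpen x ⊆ basicOpen y ↔ x ≤ y := by
  refine ⟨fun h => ?_, fun h g hg => ?_⟩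
  · by_contra hxy
    obtain ⟨g, hgx, hgy⟩ := exists_of_not_le hxy
    exact hgy (h hgx)
  · simpa using (OrderHomClass.mono g h) (by simpa using hg)

lemma basicOpen_injective : Function.Injective (basicOpen (α := α)) := fun _ _ h =>
  le_antisymm (basicOpen_subset_basicOpen.mp h.le) (basicOpen_subset_basicOpen.mp h.ge)

lemma compl_basicOpen_of_isCompl {x y : α} (h : IsCompl x y) :
    (basicOpen x)ᶜ = basicOpen y := by
  ext g
  have := (h.map g).compl_eq
  cases hx : g x <;> simp_all

variable (α) in
abbrev topology₁ : TopologicalSpace (LatticeSpectrum α) := generateFrom (range basicOpen)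

variable (α) in
abbrev topology₂ : TopologicalSpace (LatticeSpectrum α) :=
  generateFrom (range fun x => (basicOpen x)ᶜ)

lemma isOpen_basicOpen (x : α) : IsOpen[topology₁ α] (basicOpen x) :=
  GenerateOpen.basic _ ⟨x, rfl⟩

lemma isClosed_basicOpen (x : α) : IsClosed[topology₂ α] (basicOpen x) :=
  @IsClosed.mk _ (topology₂ α) _ (GenerateOpen.basic _ ⟨x, rfl⟩)

lemma basicOpen_mem_B1 (x : α) : basicOpen x ∈ B1 (topology₁ α) (topology₂ α) :=
  ⟨isOpen_basicOpen x, isClosed_basicOpen x⟩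

lemma isTopologicalBasis₁ : @IsTopologicalBasis _ (topology₁ α) (range basicOpen) :=
  @isTopologicalBasis_of_subbasis_of_finiteInter _ (topology₁ α) _ rfl
    ⟨⟨⊤, basicOpen_top⟩, by rintro _ ⟨x, rfl⟩ _ ⟨y, rfl⟩; exact ⟨x ⊓ y, basicOpen_inf x y⟩⟩

lemma isTopologicalBasis₂ : @IsTopologicalBasis _ (topology₂ α) (range fun x => (basicOpen x)ᶜ) :=
  @isTopologicalBasis_of_subbasis_of_finiteInter _ (topology₂ α) _ rfl
    ⟨⟨⊥, by simp [basicOpen_bot]⟩, by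
      rintro _ ⟨x, rfl⟩ _ ⟨y, rfl⟩; exact ⟨x ⊔ y, by simp [basicOpen_sup, compl_union]⟩⟩

theorem isClosed_range_coe : IsClosed (range ((⇑) : LatticeSpectrum α → α → Bool)) := by
  have hrange : range ((⇑) : LatticeSpectrum α → α → Bool) =
      {f | f ⊥ = ⊥} ∩ {f | f ⊤ = ⊤} ∩ (⋂ x, ⋂ y, {f | f (x ⊔ y) = f x ⊔ f y}) ∩
        ⋂ x, ⋂ y, {f | f (x ⊓ y) = f x ⊓ f y} := by
    ext f
    refine ⟨?_, fun ⟨⟨⟨hbot, htop⟩, hsup⟩, hinf⟩ => ?_⟩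
    · rintro ⟨g, rfl⟩
      simp [map_sup, map_inf]
    · simp only [mem_iInter, mem_ofPred_eq] at hsup hinf
      exact ⟨⟨⟨⟨f, hsup⟩, hinf⟩, htop, hbot⟩, rfl⟩
  have hcont (x y : α) (op : Bool → Bool → Bool) :
      Continuous fun f : α → Bool => op (f x) (f y) :=
    (continuous_of_discreteTopology (f := fun p : Bool × Bool => op p.1 p.2)).comp
      ((continuous_apply (A := fun _ => Bool) x).prodMk (continuous_apply y))
  rw [hrange]
  refine (((isClosed_eq (continuous_apply _) continuous_const).inter
    (isClosed_eq (continuous_apply _) continuous_const)).inter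
    (isClosed_iInter fun x => isClosed_iInter fun y => ?_)).inter
    (isClosed_iInter fun x => isClosed_iInter fun y => ?_)
  · exact isClosed_eq (continuous_apply _) (hcont x y (· ⊔ ·))
  · exact isClosed_eq (continuous_apply _) (hcont x y (· ⊓ ·))

/-- The join topology is coarser than the topology of pointwise convergence, which is compact
by `isClosed_range_coe`. -/
theorem compactSpace_inf : @CompactSpace _ (topology₁ α ⊓ topology₂ α) := by
  let τ : TopologicalSpace (LatticeSpectrum α) := induced (⇑) inferInstance
  have : @CompactSpace _ τ :=
    (Topology.IsClosedEmbedding.mk ⟨⟨rfl⟩, DFunLike.coe_injective⟩ isClosed_range_coe).compactSpace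
  have hτ : τ ≤ topology₁ α ⊓ topology₂ α := by
    have hclopen (x : α) : @IsClopen _ τ (basicOpen x) :=
      have hx : Continuous[τ, _] fun g : LatticeSpectrum α => g x :=
        (continuous_apply x).comp continuous_induced_dom
      (isClopen_discrete ({true} : Set Bool)).preimage hx
    refine le_inf (le_generateFrom ?_) (le_generateFrom ?_) <;> rintro _ ⟨x, rfl⟩
    · exact (hclopen x).isOpen
    · exact @IsClosed.isOpen_compl _ τ _ (hclopen x).isClosed
  exact @Function.Surjective.compactSpace _ _ τ (topology₁ α ⊓ topology₂ α) id
    (continuous_id_of_le hτ) this Function.surjective_id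

theorem isPairwiseCompact : IsPairwiseCompact (topology₁ α) (topology₂ α) :=
  isPairwiseCompact_iff_compactSpace_inf.mpr compactSpace_inf

theorem B1_eq : B1 (topology₁ α) (topology₂ α) = range basicOpen := by
  refine Subset.antisymm (fun W ⟨hW₁, hW₂⟩ => ?_) (range_subset_iff.mpr basicOpen_mem_B1)
  have hcover : W ⊆ ⋃ x : {x : α // basicOpen x ⊆ W}, basicOpen x.1 := fun g hg => by
    obtain ⟨_, ⟨x, rfl⟩, hgx, hxW⟩ :=
      @IsTopologicalBasis.exists_subset_of_mem_open _ (topology₁ α) _ isTopologicalBasis₁ _ _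
        hg hW₁
    exact mem_iUnion.mpr ⟨⟨x, hxW⟩, hgx⟩
  let := topology₁ α ⊓ topology₂ α
  have := compactSpace_inf (α := α)
  obtain ⟨s, hs⟩ := (hW₂.mono inf_le_right).isCompact.elim_finite_subcover _
    (fun x : {x : α // basicOpen x ⊆ W} => (isOpen_basicOpen x.1).mono inf_le_left) hcover
  refine ⟨s.sup Subtype.val, Subset.antisymm ?_ ?_⟩ <;> rw [basicOpen_finset_sup]
  exacts [iUnion₂_subset fun x _ => x.2, hs]

theorem B2_eq : B2 (topology₁ α) (topology₂ α) = range fun x => (basicOpen x)ᶜ := by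
  ext u
  rw [← compl_mem_B1_iff, B1_eq]
  simp only [mem_range, eq_compl_comm, eq_comm]

theorem exists_separating_opens {g h : LatticeSpectrum α} (hne : g ≠ h) :
    ∃ U V : Set (LatticeSpectrum α), Disjoint U V ∧ g ∈ U ∧ h ∈ V ∧
      ((IsOpen[topology₁ α] U ∧ IsOpen[topology₂ α] V) ∨
        (IsOpen[topology₂ α] U ∧ IsOpen[topology₁ α] V)) := by
  obtain ⟨x, hx⟩ := DFunLike.ne_iff.mp hne
  have hcompl := @IsClosed.isOpen_compl _ (topology₂ α) _ (isClosed_basicOpen x)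
  cases hg : g x
  · exact ⟨(basicOpen x)ᶜ, basicOpen x, disjoint_compl_left, by simp [hg],
      by simpa [hg] using hx, Or.inr ⟨hcompl, isOpen_basicOpen x⟩⟩
  · exact ⟨basicOpen x, (basicOpen x)ᶜ, disjoint_compl_right, by simp [hg],
      by simpa [hg] using hx, Or.inl ⟨isOpen_basicOpen x, hcompl⟩⟩

section DoubleStoneAlgebra

variable {A : Type*} [DoubleStoneAlgebra A]

lemma basicOpen_subset_compl_basicOpen {x y : A} :
    basicOpen y ⊆ (basicOpen x)ᶜ ↔ y ≤ pstar x := by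
  rw [subset_compl_iff_disjoint_right, disjoint_iff_inter_eq_empty, ← basicOpen_inf,
    ← basicOpen_bot, basicOpen_injective.eq_iff, pstar_spec]

lemma compl_basicOpen_subset_basicOpen {x y : A} :
    (basicOpen y)ᶜ ⊆ basicOpen x ↔ pplus x ≤ y := by
  rw [compl_subset_iff_union, ← basicOpen_sup, ← basicOpen_top, basicOpen_injective.eq_iff,
    pplus_spec]

lemma interior_compl_basicOpen (x : A) :
    interior[topology₁ A] (basicOpen x)ᶜ = basicOpen (pstar x) := by
  ext g
  rw [@mem_interior_iff_mem_nhds _ (topology₁ A),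
    @IsTopologicalBasis.mem_nhds_iff _ (topology₁ A) _ _ _ isTopologicalBasis₁]
  simp only [exists_range_iff, basicOpen_subset_compl_basicOpen]
  exact ⟨fun ⟨y, hgy, hy⟩ => basicOpen_subset_basicOpen.mpr hy hgy, fun hg => ⟨_, hg, le_rfl⟩⟩

lemma interior_basicOpen (x : A) :
    interior[topology₂ A] (basicOpen x) = (basicOpen (pplus x))ᶜ := by
  ext g
  rw [@mem_interior_iff_mem_nhds _ (topology₂ A),
    @IsTopologicalBasis.mem_nhds_iff _ (topology₂ A) _ _ _ isTopologicalBasis₂]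
  simp only [exists_range_iff, compl_basicOpen_subset_basicOpen]
  exact ⟨fun ⟨y, hgy, hy⟩ hgx => hgy (basicOpen_subset_basicOpen.mpr hy hgx),
    fun hg => ⟨_, hg, le_rfl⟩⟩

lemma closure_basicOpen (x : A) :
    closure[topology₁ A] (basicOpen x) = (basicOpen (pstar x))ᶜ := by
  rw [@closure_eq_compl_interior_compl _ (topology₁ A), interior_compl_basicOpen]

lemma closure_compl_basicOpen (x : A) :
    closure[topology₂ A] (basicOpen x)ᶜ = basicOpen (pplus x) := by
  rw [@closure_compl _ (topology₂ A), interior_basicOpen, compl_compl]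

lemma isClopen₁_basicOpen_of_isCompl {x y : A} (h : IsCompl x y) :
    @IsClopen _ (topology₁ A) (basicOpen x) :=
  ⟨@IsClosed.mk _ (topology₁ A) _ <| by
    rw [compl_basicOpen_of_isCompl h]; exact isOpen_basicOpen y, isOpen_basicOpen x⟩

lemma isClopen₂_basicOpen_of_isCompl {x y : A} (h : IsCompl x y) :
    @IsClopen _ (topology₂ A) (basicOpen x) :=
  ⟨isClosed_basicOpen x, by
    rw [← compl_basicOpen_of_isCompl h.symm]
    exact @IsClosed.isOpen_compl _ (topology₂ A) _ (isClosed_basicOpen y)⟩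

end DoubleStoneAlgebra

end LatticeSpectrum

namespace CRDSA

open LatticeSpectrum

def spectrumSpace (A : Type) [CRDSA A] : CRDPStoneSpace where
  X := LatticeSpectrum A
  t1 := topology₁ A
  t2 := topology₂ A
  pairwise_compact := isPairwiseCompact (α := A)
  pairwise_hausdorff _ _ := exists_separating_opens
  basis1 := (B1_eq (α := A)).symm ▸ isTopologicalBasis₁
  basis2 := (B2_eq (α := A)).symm ▸ isTopologicalBasis₂
  cond1 := by
    rw [B2_eq]
    rintro _ ⟨x, rfl⟩
    rw [interior_compl_basicOpen]
    exact basicOpen_mem_B1 _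
  cond2 := by
    rw [B1_eq]
    rintro _ ⟨x, rfl⟩
    rw [interior_basicOpen, compl_mem_B2_iff]
    exact basicOpen_mem_B1 _
  cond3 := by
    rw [B1_eq]
    rintro _ ⟨x, rfl⟩
    rw [closure_basicOpen, compl_compl]
    exact isClopen₁_basicOpen_of_isCompl (isCompl_pstar_pstar_pstar x)
  cond4 := by
    rw [B1_eq]
    rintro _ ⟨x, rfl⟩
    rw [closure_compl_basicOpen, compl_basicOpen_of_isCompl (isCompl_pplus_pplus_pplus x)]
    exact isClopen₂_basicOpen_of_isCompl (isCompl_pplus_pplus_pplus x).symm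
  cond5 := by
    rw [B1_eq]
    rintro _ ⟨x, rfl⟩ _ ⟨y, rfl⟩ hcl hint
    rw [closure_basicOpen, closure_basicOpen, compl_inj_iff] at hcl
    rw [interior_basicOpen, interior_basicOpen, compl_inj_iff] at hint
    rw [regular x y (basicOpen_injective hcl) (basicOpen_injective hint)]
  cond6 := by
    obtain ⟨k, hk, hk'⟩ := core_nonempty (α := A)
    refine ⟨basicOpen k, basicOpen_mem_B1 k, ?_, ?_⟩
    · unfold frontier
      rw [closure_basicOpen, hk, basicOpen_bot, compl_empty, ← compl_eq_univ_sdiff,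
        @IsOpen.interior_eq _ (topology₁ A) _ (isOpen_basicOpen k)]
    · unfold frontier
      rw [closure_compl_basicOpen, hk', basicOpen_top, ← compl_eq_univ_sdiff,
        @IsOpen.interior_eq _ (topology₂ A) _ (isClosed_basicOpen k).isOpen_compl, compl_compl]

end CRDSA

namespace CRDPStoneSpace

variable (S : CRDPStoneSpace)

def B1Alg : Type := {u : Set S.X // u ∈ B1 S.t1 S.t2}

instance : DistribLattice S.B1Alg :=
  Subtype.distribLattice (fun _ _ => union_mem_B1) (fun _ _ => inter_mem_B1)

instance : BoundedOrder S.B1Alg := Subtype.boundedOrder empty_mem_B1 univ_mem_B1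

variable {S}

@[simp] lemma coe_sup (u v : S.B1Alg) : (u ⊔ v).1 = u.1 ∪ v.1 := rfl

@[simp] lemma coe_inf (u v : S.B1Alg) : (u ⊓ v).1 = u.1 ∩ v.1 := rfl

@[simp] lemma coe_bot : (⊥ : S.B1Alg).1 = ∅ := rfl

@[simp] lemma coe_top : (⊤ : S.B1Alg).1 = univ := rfl

lemma isOpen_closure_coe (u : S.B1Alg) : IsOpen[S.t1] (closure[S.t1] u.1) :=
  (@isClosed_compl_iff _ S.t1 _).mp (S.cond3 u.1 u.2).1

lemma isClosed_compl_closure_compl_coe (u : S.B1Alg) : IsClosed[S.t2] (closure[S.t2] u.1ᶜ)ᶜ :=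
  (S.cond4 u.1 u.2).1

instance : CRDSA S.B1Alg where
  pstar u := ⟨interior[S.t1] u.1ᶜ, S.cond1 _ (compl_mem_B2_iff.mpr u.2)⟩
  pplus u := ⟨closure[S.t2] u.1ᶜ, by
    rw [@closure_compl _ S.t2, compl_mem_B1_iff]; exact S.cond2 _ u.2⟩
  pstar_spec u w := by
    rw [← le_bot_iff]
    change w.1 ∩ u.1 ⊆ ∅ ↔ w.1 ⊆ interior[S.t1] u.1ᶜ
    rw [@IsOpen.subset_interior_iff _ S.t1 _ _ w.2.1, subset_empty_iff,
      ← disjoint_iff_inter_eq_empty, subset_compl_iff_disjoint_right]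
  pplus_spec u w := by
    rw [← top_le_iff]
    change univ ⊆ w.1 ∪ u.1 ↔ closure[S.t2] u.1ᶜ ⊆ w.1
    rw [@IsClosed.closure_subset_iff _ S.t2 _ _ w.2.2, univ_subset_iff, compl_subset_iff_union,
      union_comm]
  stone u := Subtype.ext <| by
    change interior[S.t1] u.1ᶜ ∪ interior[S.t1] (interior[S.t1] u.1ᶜ)ᶜ = univ
    rw [@interior_compl _ S.t1, compl_compl, @IsOpen.interior_eq _ S.t1 _ (isOpen_closure_coe u),
      compl_union_self]
  stone_dual u := Subtype.ext <| by
    change closure[S.t2] u.1ᶜ ∩ closure[S.t2] (closure[S.t2] u.1ᶜ)ᶜ = ∅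
    rw [@IsClosed.closure_eq _ S.t2 _ (isClosed_compl_closure_compl_coe u), inter_compl_self]
  regular u w hstar hplus := by
    have h1 : interior[S.t1] u.1ᶜ = interior[S.t1] w.1ᶜ := congrArg Subtype.val hstar
    have h2 : closure[S.t2] u.1ᶜ = closure[S.t2] w.1ᶜ := congrArg Subtype.val hplus
    rw [@interior_compl _ S.t1, @interior_compl _ S.t1, compl_inj_iff] at h1
    rw [@closure_compl _ S.t2, @closure_compl _ S.t2, compl_inj_iff] at h2
    exact Subtype.ext (S.cond5 u.1 u.2 w.1 w.2 h1 h2)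
  core_nonempty := by
    obtain ⟨k, hk, hfr₁, hfr₂⟩ := S.cond6
    refine ⟨⟨k, hk⟩, Subtype.ext ?_, Subtype.ext ?_⟩
    · change interior[S.t1] kᶜ = ∅
      rw [@interior_compl _ S.t1, @closure_eq_self_union_frontier _ S.t1, hfr₁, union_compl_self,
        compl_univ]
    · change closure[S.t2] kᶜ = univ
      rw [@closure_eq_self_union_frontier _ S.t2, hfr₂, compl_union_self]

lemma coe_pstar (u : S.B1Alg) : (pstar u).1 = interior[S.t1] u.1ᶜ := rfl

lemma coe_pplus (u : S.B1Alg) : (pplus u).1 = closure[S.t2] u.1ᶜ := rfl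

lemma compl_coe_pstar (u : S.B1Alg) : (pstar u).1ᶜ = closure[S.t1] u.1 := by
  rw [coe_pstar, @interior_compl _ S.t1, compl_compl]

end CRDPStoneSpace

namespace IsCRDPStoneMap

open CRDPStoneSpace

variable {S T : CRDPStoneSpace} {f : S.X → T.X}

lemma preimage_mem_B1 (hf : IsCRDPStoneMap S T f) {u : Set T.X} (hu : u ∈ B1 T.t1 T.t2) :
    f ⁻¹' u ∈ B1 S.t1 S.t2 :=
  ⟨@Continuous.isOpen_preimage _ _ S.t1 T.t1 f hf.1 u hu.1,
    @IsClosed.preimage _ _ S.t2 T.t2 f hf.2.1 u hu.2⟩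

lemma closure_preimage₁ (hf : IsCRDPStoneMap S T f) {u : Set T.X} (hu : u ∈ B1 T.t1 T.t2) :
    closure[S.t1] (f ⁻¹' u) = f ⁻¹' closure[T.t1] u :=
  Subset.antisymm (@Continuous.closure_preimage_subset _ _ S.t1 T.t1 f hf.1 u)
    (preimage_closure_aux S.t1 T.t1 f u (hf.2.2 u hu).1)

lemma closure_preimage₂ (hf : IsCRDPStoneMap S T f) {u : Set T.X} (hu : u ∈ B1 T.t1 T.t2) :
    closure[S.t2] (f ⁻¹' uᶜ) = f ⁻¹' closure[T.t2] uᶜ :=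
  Subset.antisymm (@Continuous.closure_preimage_subset _ _ S.t2 T.t2 f hf.2.1 uᶜ)
    (preimage_closure_aux S.t2 T.t2 f uᶜ (hf.2.2 u hu).2)

def comap (hf : IsCRDPStoneMap S T f) (u : T.B1Alg) : S.B1Alg :=
  ⟨f ⁻¹' u.1, hf.preimage_mem_B1 u.2⟩

lemma isCRDSAHom_comap (hf : IsCRDPStoneMap S T f) : IsCRDSAHom hf.comap := by
  refine ⟨fun _ _ => rfl, fun _ _ => rfl, fun u => Subtype.ext ?_, fun u => Subtype.ext ?_,
    rfl, rfl⟩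
  · change f ⁻¹' interior[T.t1] u.1ᶜ = interior[S.t1] (f ⁻¹' u.1)ᶜ
    rw [@interior_compl _ T.t1, @interior_compl _ S.t1, preimage_compl,
      hf.closure_preimage₁ u.2]
  · change f ⁻¹' closure[T.t2] u.1ᶜ = closure[S.t2] (f ⁻¹' u.1)ᶜ
    rw [← preimage_compl, hf.closure_preimage₂ u.2]

theorem of_isCRDSAHom (φ : T.B1Alg → S.B1Alg) (hφ : IsCRDSAHom φ)
    (hφf : ∀ u, (φ u).1 = f ⁻¹' u.1) : IsCRDPStoneMap S T f := by
  obtain ⟨-, -, hstar, hplus, -, -⟩ := hφ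
  refine ⟨?_, ?_, fun u hu => ⟨?_, ?_⟩⟩
  · refine (@IsTopologicalBasis.continuous_iff _ _ S.t1 T.t1 _ T.basis1 f).mpr fun u hu => ?_
    rw [← hφf ⟨u, hu⟩]
    exact (φ ⟨u, hu⟩).2.1
  · refine (@IsTopologicalBasis.continuous_iff _ _ S.t2 T.t2 _ T.basis2 f).mpr fun v hv => ?_
    have hvc : vᶜ ∈ B1 T.t1 T.t2 := compl_mem_B1_iff.mpr hv
    rw [← compl_compl v, preimage_compl, ← hφf ⟨vᶜ, hvc⟩]
    exact @IsClosed.isOpen_compl _ S.t2 _ (φ ⟨vᶜ, hvc⟩).2.2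
  · let w : T.B1Alg := ⟨u, hu⟩
    calc f ⁻¹' @frontier _ T.t1 u ⊆ f ⁻¹' closure[T.t1] u :=
          preimage_mono (@frontier_subset_closure _ T.t1 u)
      _ = closure[S.t1] (f ⁻¹' u) := by
        rw [← compl_coe_pstar w, preimage_compl, ← hφf, hstar, compl_coe_pstar, hφf]
  · let w : T.B1Alg := ⟨u, hu⟩
    calc f ⁻¹' @frontier _ T.t2 uᶜ ⊆ f ⁻¹' closure[T.t2] uᶜ :=
          preimage_mono (@frontier_subset_closure _ T.t2 uᶜ)
      _ = closure[S.t2] (f ⁻¹' uᶜ) := by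
        rw [← coe_pplus w, ← hφf, hplus, coe_pplus, hφf, preimage_compl]

end IsCRDPStoneMap

namespace CRDSACat

open LatticeSpectrum

def basicOpenHom (A : CRDSACat) : A ⟶ ⟨(CRDSA.spectrumSpace A.carrier).B1Alg⟩ :=
  ⟨fun x => ⟨basicOpen x, basicOpen_mem_B1 x⟩,
    fun x y => Subtype.ext (basicOpen_sup x y), fun x y => Subtype.ext (basicOpen_inf x y),
    fun x => Subtype.ext (interior_compl_basicOpen x).symm,
    fun x => Subtype.ext (closure_compl_basicOpen x).symm,
    Subtype.ext basicOpen_bot, Subtype.ext basicOpen_top⟩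

lemma basicOpenHom_bijective (A : CRDSACat) : Function.Bijective (basicOpenHom A).1 := by
  refine ⟨fun x y h => basicOpen_injective (congrArg Subtype.val h), fun u => ?_⟩
  obtain ⟨x, hx⟩ : u.1 ∈ range basicOpen := B1_eq (α := A.carrier) ▸ u.2
  exact ⟨x, Subtype.ext hx⟩

noncomputable def basicOpenIso (A : CRDSACat) : A ≅ ⟨(CRDSA.spectrumSpace A.carrier).B1Alg⟩ :=
  isoOfBijective (basicOpenHom A) (basicOpenHom_bijective A)

lemma isCRDPStoneMap_precomp {A B : CRDSACat} (h : A ⟶ B) :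
    IsCRDPStoneMap (CRDSA.spectrumSpace B.carrier) (CRDSA.spectrumSpace A.carrier)
      fun g => g.comp h.2.toBoundedLatticeHom := by
  refine .of_isCRDSAHom _ ((basicOpenIso A).inv ≫ h ≫ (basicOpenIso B).hom).2 fun u => ?_
  obtain ⟨x, rfl⟩ := (basicOpenHom_bijective A).2 u
  change (((basicOpenIso A).hom ≫ (basicOpenIso A).inv ≫ h ≫ (basicOpenIso B).hom).1 x).1 = _
  rw [Iso.hom_inv_id_assoc]
  rfl

noncomputable def spectrumFunctor : CRDSACat ⥤ CRDPStoneSpaceᵒᵖ where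
  obj A := op (CRDSA.spectrumSpace A.carrier)
  map h := Quiver.Hom.op ⟨_, isCRDPStoneMap_precomp h⟩
  map_id _ := rfl
  map_comp _ _ := rfl

end CRDSACat

namespace CRDPStoneSpace

open LatticeSpectrum

def b1AlgFunctor : CRDPStoneSpaceᵒᵖ ⥤ CRDSACat where
  obj S := ⟨S.unop.B1Alg⟩
  map f := ⟨f.unop.2.comap, f.unop.2.isCRDSAHom_comap⟩
  map_id _ := rfl
  map_comp _ _ := rfl

variable (S : CRDPStoneSpace)

open Classical in
noncomputable def toSpectrum (z : S.X) : LatticeSpectrum S.B1Alg where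
  toFun u := decide (z ∈ u.1)
  map_sup' u v := by simp
  map_inf' u v := by simp
  map_bot' := by simp
  map_top' := by simp

variable {S}

@[simp]
lemma toSpectrum_apply (z : S.X) (u : S.B1Alg) : S.toSpectrum z u ↔ z ∈ u.1 := by
  simp [toSpectrum]

lemma preimage_toSpectrum_basicOpen (u : S.B1Alg) : S.toSpectrum ⁻¹' basicOpen u = u.1 := by
  ext z; simp

theorem toSpectrum_injective : Function.Injective S.toSpectrum := by
  have separate {a b : S.X} {W : Set S.X} (hW : IsOpen[S.t1] W) (ha : a ∈ W) (hb : b ∉ W) :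
      S.toSpectrum a ≠ S.toSpectrum b := fun h => by
    obtain ⟨u, hu, hau, huW⟩ :=
      @IsTopologicalBasis.exists_subset_of_mem_open _ S.t1 _ S.basis1 a W ha hW
    have hbu : b ∉ u := fun hbu => hb (huW hbu)
    simpa [toSpectrum, hau, hbu] using DFunLike.congr_fun h ⟨u, hu⟩
  intro x y hxy
  by_contra hne
  obtain ⟨U, V, hUV, hxU, hyV, hU | hV⟩ := S.pairwise_hausdorff x y hne
  · exact separate hU.1 hxU (fun hyU => disjoint_left.mp hUV hyU hyV) hxy
  · exact separate hV.2 hyV (fun hxV => disjoint_left.mp hUV hxU hxV) hxy.symm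

theorem exists_forall_mem_iff (g : LatticeSpectrum S.B1Alg) (s : Finset S.B1Alg) :
    ∃ z, ∀ u ∈ s, z ∈ u.1 ↔ g u := by
  classical
  let a := (s.filter (g ·)).inf id
  let b := (s.filter (¬ g ·)).sup id
  have ha : g a = ⊤ := by
    rw [map_finset_inf, Finset.inf_eq_top_iff]
    exact fun u hu => by simpa using (Finset.mem_filter.mp hu).2
  have hb : g b = ⊥ := by
    rw [map_finset_sup, Finset.sup_eq_bot_iff]
    exact fun u hu => by simpa using (Finset.mem_filter.mp hu).2
  have hab : ¬ a ≤ b := fun hle => by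
    have := OrderHomClass.mono g hle
    rw [ha, hb, top_le_iff] at this
    exact bot_ne_top this
  obtain ⟨z, hza, hzb⟩ := not_subset.mp hab
  refine ⟨z, fun u hu => ?_⟩
  by_cases hgu : g u
  · simpa [hgu] using Finset.inf_le (f := id) (Finset.mem_filter.mpr ⟨hu, hgu⟩) hza
  · simpa [hgu] using fun hzu => hzb (Finset.le_sup (f := id) (Finset.mem_filter.mpr ⟨hu, hgu⟩) hzu)

/-- The sets `u` with `g u` and the complements of the other `u` are closed in the compact join
topology, and they have the finite intersection property by `exists_forall_mem_iff`. -/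
theorem toSpectrum_surjective : Function.Surjective S.toSpectrum := by
  intro g
  let C : S.B1Alg → Set S.X := fun u => {z | z ∈ u.1 ↔ g u}
  have hC (u : S.B1Alg) : IsClosed[S.t1 ⊓ S.t2] (C u) := by
    cases hgu : g u
    · have hCu : C u = u.1ᶜ := by ext; simp [C, hgu]
      exact hCu ▸ IsClosed.mono (t₁ := S.t1 ⊓ S.t2) (@IsOpen.isClosed_compl _ S.t1 _ u.2.1)
        inf_le_left
    · have hCu : C u = u.1 := by ext; simp [C, hgu]
      exact hCu ▸ IsClosed.mono (t₁ := S.t1 ⊓ S.t2) u.2.2 inf_le_right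
  have := isPairwiseCompact_iff_compactSpace_inf.mp S.pairwise_compact
  obtain ⟨z, -, hz⟩ := @IsCompact.inter_iInter_nonempty _ (S.t1 ⊓ S.t2) _ _
    (@isCompact_univ _ (S.t1 ⊓ S.t2) this) C hC fun s =>
      let ⟨z, hz⟩ := exists_forall_mem_iff g s
      ⟨z, mem_univ z, mem_iInter₂.mpr hz⟩
  exact ⟨z, DFunLike.ext _ _ fun u =>
    Bool.eq_iff_iff.mpr ((toSpectrum_apply z u).trans (mem_iInter.mp hz u))⟩

noncomputable def toSpectrumEquiv (S : CRDPStoneSpace) : S.X ≃ LatticeSpectrum S.B1Alg :=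
  .ofBijective S.toSpectrum ⟨toSpectrum_injective, toSpectrum_surjective⟩

theorem isCRDPStoneMap_toSpectrum :
    IsCRDPStoneMap S (CRDSA.spectrumSpace S.B1Alg) S.toSpectrum := by
  let η := CRDSACat.basicOpenIso ⟨S.B1Alg⟩
  refine .of_isCRDSAHom _ η.inv.2 fun w => ?_
  obtain ⟨u, rfl⟩ := (CRDSACat.basicOpenHom_bijective ⟨S.B1Alg⟩).2 w
  change ((η.hom ≫ η.inv).1 u).1 = _
  rw [Iso.hom_inv_id]
  exact (preimage_toSpectrum_basicOpen u).symm

theorem isCRDPStoneMap_toSpectrumEquiv_symm :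
    IsCRDPStoneMap (CRDSA.spectrumSpace S.B1Alg) S S.toSpectrumEquiv.symm := by
  refine .of_isCRDSAHom _ (CRDSACat.basicOpenIso ⟨S.B1Alg⟩).hom.2 fun u => ?_
  change basicOpen u = S.toSpectrumEquiv.symm ⁻¹' u.1
  rw [← Equiv.image_eq_preimage_symm, ← preimage_toSpectrum_basicOpen u]
  exact (S.toSpectrumEquiv.image_preimage _).symm

noncomputable def toSpectrumIso (S : CRDPStoneSpace) : S ≅ CRDSA.spectrumSpace S.B1Alg where
  hom := ⟨S.toSpectrum, isCRDPStoneMap_toSpectrum⟩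
  inv := ⟨S.toSpectrumEquiv.symm, isCRDPStoneMap_toSpectrumEquiv_symm⟩
  hom_inv_id := Subtype.ext (funext S.toSpectrumEquiv.symm_apply_apply)
  inv_hom_id := Subtype.ext (funext S.toSpectrumEquiv.apply_symm_apply)

end CRDPStoneSpace

/-- the category of core regular double Stone algebras is dually
equivalent to the category of core regular double pairwise Stone spaces. -/
theorem CRDSA_dually_equivalent_to_CRDPStone :
    Nonempty (CategoryTheory.Equivalence CRDSACat CRDPStoneSpaceᵒᵖ) :=
  ⟨.mk CRDSACat.spectrumFunctor CRDPStoneSpace.b1AlgFunctor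
    (NatIso.ofComponents CRDSACat.basicOpenIso fun _ => rfl)
    (NatIso.ofComponents (fun S => S.unop.toSpectrumIso.op) fun _ => rfl)⟩
end
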